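/- arXiv:2107.06025 — 10 statements merged into one kernel-verified Lean document; each statement's English description precedes it below -/
import Mathlib

section
/- Let 0 < q < 1/2. Then for (Lebesgue-) almost every pair (T,S) ∈ (1,2) × (0,1), the polynomial P_{q,T,S}(x) = (T+S−1)x³ + (1−T−2S+q(S−1−T))x² + (S+q(T−S))x has exactly 2 distinct roots in [0,1]; equivalently, the two-dimensional Lebesgue measure of {(T,S) ∈ (1,2)×(0,1) : P_{q,T,S} has exactly 2 distinct roots in [0,1]} equals 1, and the sets where it has exactly 1 or exactly 3 such roots have measure 0. -/
/-!
Since `P q T S x = x * Q x` for a quadratic `Q` with `Q 0 = S + q (T - S)` and `Q 1 = -q`,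
on the whole rectangle `Q` changes sign on `[0,1]`. A quadratic whose values at `0` and `1` have
opposite signs has exactly one root in `[0,1]`, so `P` has exactly the two roots `0` and that one:
the set with two equilibria is the full rectangle and the other two sets are empty.
-/

open MeasureTheory Set

/-- The cubic whose roots in `[0,1]` are the equilibria of the replicator–mutator
dynamics for the pairwise social dilemma with payoffs `a₁₁ = 1, a₁₂ = S, a₂₁ = T, a₂₂ = 0`. -/
noncomputable def P (q T S x : ℝ) : ℝ :=
  (T + S - 1) * x ^ 3 + (1 - T - 2 * S + q * (S - 1 - T)) * x ^ 2 + (S + q * (T - S)) * x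

/-- Number of distinct roots of `P q T S` in the interval `[0,1]`. -/
noncomputable def nRoots (q T S : ℝ) : ℕ :=
  {x : ℝ | x ∈ Set.Icc (0 : ℝ) 1 ∧ P q T S x = 0}.ncard

theorem existsUnique_quadratic_root_Icc_of_mul_neg {a b c : ℝ} (h : c * (a + b + c) < 0) :
    ∃! r, r ∈ Icc (0 : ℝ) 1 ∧ a * r ^ 2 + b * r + c = 0 := by
  have hcont : ContinuousOn (fun x : ℝ => a * x ^ 2 + b * x + c) (uIcc 0 1) := by fun_prop
  have hsign : (0 : ℝ) ∈ uIcc c (a + b + c) := by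
    rcases mul_neg_iff.mp h with ⟨h0, h1⟩ | ⟨h0, h1⟩
    · exact mem_uIcc.mpr (Or.inr ⟨h1.le, h0.le⟩)
    · exact mem_uIcc.mpr (Or.inl ⟨h0.le, h1.le⟩)
  obtain ⟨r, hr, hQr⟩ := intermediate_value_uIcc hcont (by simpa using hsign)
  rw [uIcc_of_le zero_le_one] at hr
  refine ⟨r, ⟨hr, hQr⟩, fun x ⟨hx, hQx⟩ => ?_⟩
  by_contra hne
  -- Two distinct roots `x, r` force `Q y = a (y - x) (y - r)`, so `Q 0 * Q 1 ≥ 0`.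
  have hsum : a * (x + r) + b = 0 :=
    (mul_eq_zero.mp (by linear_combination hQx - hQr : (x - r) * (a * (x + r) + b) = 0))
      |>.resolve_left (sub_ne_zero.mpr hne)
  have hprod : c = a * x * r := by linear_combination hQx - x * hsum
  have hQ1 : a + b + c = a * (1 - x) * (1 - r) := by linear_combination hsum + hprod
  have hfactor : c * (a + b + c) = a ^ 2 * (x * (1 - x)) * (r * (1 - r)) := by
    rw [hQ1, hprod]; ring
  have hx' : 0 ≤ x * (1 - x) := mul_nonneg hx.1 (sub_nonneg.mpr hx.2)
  have hr' : 0 ≤ r * (1 - r) := mul_nonneg hr.1 (sub_nonneg.mpr hr.2)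
  have : 0 ≤ c * (a + b + c) := by rw [hfactor]; positivity
  linarith

theorem P_eq_mul (q T S x : ℝ) :
    P q T S x =
      x * ((T + S - 1) * x ^ 2 + (1 - T - 2 * S + q * (S - 1 - T)) * x + (S + q * (T - S))) := by
  unfold P; ring

theorem nRoots_eq_two {q T S : ℝ} (hq : 0 < q) (hc : 0 < S + q * (T - S)) : nRoots q T S = 2 := by
  have hQ1 : (T + S - 1) + (1 - T - 2 * S + q * (S - 1 - T)) + (S + q * (T - S)) = -q := by ring
  obtain ⟨r, ⟨hr, hQr⟩, huniq⟩ := existsUnique_quadratic_root_Icc_of_mul_neg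
    (a := T + S - 1) (b := 1 - T - 2 * S + q * (S - 1 - T)) (c := S + q * (T - S))
    (by rw [hQ1]; exact mul_neg_of_pos_of_neg hc (neg_lt_zero.mpr hq))
  have hr0 : r ≠ 0 := by rintro rfl; simp at hQr; linarith
  have hroots : {x : ℝ | x ∈ Icc (0 : ℝ) 1 ∧ P q T S x = 0} = {0, r} := by
    ext x
    simp only [mem_ofPred_eq, mem_insert_iff, mem_singleton_iff, P_eq_mul, mul_eq_zero]
    constructor
    · rintro ⟨hx, hx0 | hQx⟩
      exacts [Or.inl hx0, Or.inr (huniq x ⟨hx, hQx⟩)]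
    · rintro (rfl | rfl)
      exacts [⟨⟨le_rfl, zero_le_one⟩, Or.inl rfl⟩, ⟨hr, Or.inr hQr⟩]
  rw [nRoots, hroots, ncard_pair hr0.symm]

theorem SD_two_equilibria_general (q : ℝ) (hq0 : 0 < q) :
    volume {p : ℝ × ℝ | p.1 ∈ Ioo (1 : ℝ) 2 ∧ p.2 ∈ Ioo (0 : ℝ) 1 ∧ nRoots q p.1 p.2 = 2} = 1 ∧
    volume {p : ℝ × ℝ | p.1 ∈ Ioo (1 : ℝ) 2 ∧ p.2 ∈ Ioo (0 : ℝ) 1 ∧ nRoots q p.1 p.2 = 1} = 0 ∧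
    volume {p : ℝ × ℝ | p.1 ∈ Ioo (1 : ℝ) 2 ∧ p.2 ∈ Ioo (0 : ℝ) 1 ∧ nRoots q p.1 p.2 = 3} = 0 := by
  have hsets : ∀ k : ℕ, {p : ℝ × ℝ | p.1 ∈ Ioo (1 : ℝ) 2 ∧ p.2 ∈ Ioo (0 : ℝ) 1 ∧ nRoots q p.1 p.2 = k}
      = {p | p ∈ Ioo (1 : ℝ) 2 ×ˢ Ioo (0 : ℝ) 1 ∧ 2 = k} := by
    intro k
    ext ⟨T, S⟩
    simp only [mem_ofPred_eq, mem_prod, and_assoc]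
    refine and_congr_right fun ⟨hT1, _⟩ => and_congr_right fun ⟨hS0, hS1⟩ => ?_
    rw [nRoots_eq_two hq0 (add_pos hS0 (mul_pos hq0 (by linarith)))]
  refine ⟨?_, by rw [hsets]; simp, by rw [hsets]; simp⟩
  simp only [hsets, and_true, ofPred_mem_eq]
  rw [Measure.volume_eq_prod, Measure.prod_prod]
  norm_num

theorem SD_two_equilibria (q : ℝ) (hq0 : 0 < q) (hq2 : q < 1 / 2) :
    volume {p : ℝ × ℝ | p.1 ∈ Ioo (1 : ℝ) 2 ∧ p.2 ∈ Ioo (0 : ℝ) 1 ∧ nRoots q p.1 p.2 = 2} = 1 ∧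
    volume {p : ℝ × ℝ | p.1 ∈ Ioo (1 : ℝ) 2 ∧ p.2 ∈ Ioo (0 : ℝ) 1 ∧ nRoots q p.1 p.2 = 1} = 0 ∧
    volume {p : ℝ × ℝ | p.1 ∈ Ioo (1 : ℝ) 2 ∧ p.2 ∈ Ioo (0 : ℝ) 1 ∧ nRoots q p.1 p.2 = 3} = 0 :=
  SD_two_equilibria_general q hq0
end

section
/- Let 0 < q < 1/2. Then the two-dimensional Lebesgue measure of the set of pairs (T,S) ∈ (0,1) × (−1,0) for which the polynomial P_{q,T,S}(x) = (T+S−1)x³ + (1−T−2S+q(S−1−T))x² + (S+q(T−S))x has exactly 2 distinct roots in the interval [0,1] equals q/(2(1−q)). -/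
/-!
Write `P q T S x = x * Q x` with `Q 0 = S + q (T - S)` and `Q 1 = -q < 0`; in the Stag Hunt the
leading coefficient `a = T + S - 1` of `Q` is negative. If `r, s` are the roots of `Q`, then
`Q 0 = a r s` and `Q 1 = a (1 - r) (1 - s)`. When `Q 0 > 0` this gives `r s < 0`, so `Q` has
exactly one root in `(0, 1)` and there are exactly two equilibria. When `Q 0 < 0`, both `r s` and
`(1 - r) (1 - s)` are positive, so the roots of `Q` in `(0, 1)` come in pairs and two equilibria
force a double root. Up to the null sets `{Q 0 = 0}` and `{discrim = 0}`, the event is therefore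
the triangle `-q T / (1 - q) < S < 0`, of area `q / (2 (1 - q))`.
-/

open MeasureTheory Set

section Quadratic

variable {K : Type*} [Field K] {a b c r s : K}

theorem quadratic_eq_mul_sub_mul_sub (ha : a ≠ 0) (hr : a * r ^ 2 + b * r + c = 0)
    (hs : s = -b / a - r) (x : K) : a * x ^ 2 + b * x + c = a * (x - r) * (x - s) := by
  obtain ⟨u, rfl⟩ : ∃ u, b = a * u := ⟨b / a, (mul_div_cancel₀ b ha).symm⟩
  rw [hs, neg_div, mul_div_cancel_left₀ u ha]
  linear_combination hr

theorem discrim_eq_of_quadratic_eq_zero (ha : a ≠ 0) (hr : a * r ^ 2 + b * r + c = 0)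
    (hs : s = -b / a - r) : discrim a b c = a ^ 2 * (r - s) ^ 2 := by
  obtain ⟨u, rfl⟩ : ∃ u, b = a * u := ⟨b / a, (mul_div_cancel₀ b ha).symm⟩
  rw [hs, neg_div, mul_div_cancel_left₀ u ha, discrim]
  linear_combination (-4 * a) * hr

theorem quadratic_eq_zero_iff_of_root (ha : a ≠ 0) (hr : a * r ^ 2 + b * r + c = 0) {x : K} :
    a * x ^ 2 + b * x + c = 0 ↔ x = r ∨ x = -b / a - r := by
  rw [quadratic_eq_mul_sub_mul_sub ha hr rfl, mul_assoc, mul_eq_zero, or_iff_right ha,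
    mul_eq_zero, sub_eq_zero, sub_eq_zero]

theorem finite_setOf_quadratic_eq_zero (ha : a ≠ 0) :
    {x : K | a * x ^ 2 + b * x + c = 0}.Finite := by
  rcases eq_empty_or_nonempty {x : K | a * x ^ 2 + b * x + c = 0} with h | ⟨r, hr⟩
  · exact h ▸ finite_empty
  exact (toFinite {r, -b / a - r}).subset fun x hx => (quadratic_eq_zero_iff_of_root ha hr).1 hx

end Quadratic

theorem measure_prod_null_of_countable_slices {α β : Type*} [MeasurableSpace α]
    [MeasurableSpace β] (μ : Measure α) (ν : Measure β) [SFinite ν] [NullSingletonClass ν]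
    {s : Set (α × β)} (hs : MeasurableSet s) (h : ∀ x, (Prod.mk x ⁻¹' s).Countable) :
    μ.prod ν s = 0 :=
  (Measure.measure_prod_null hs).2 (.of_forall fun x => (h x).measure_zero ν)

theorem volume_regionBetween_neg_mul_zero {k : ℝ} (hk : 0 ≤ k) :
    volume (regionBetween (fun x => -(k * x)) (fun _ => 0) (Ioo 0 1)) =
      ENNReal.ofReal (k / 2) := by
  rw [Measure.volume_eq_prod, volume_regionBetween_eq_integral
    (f := fun x => -(k * x))
    ((continuous_const_mul k).neg.integrableOn_Icc.mono_set Ioo_subset_Icc_self)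
    (integrableOn_const (by simp)) measurableSet_Ioo
    (fun x hx => neg_nonpos.2 (mul_nonneg hk hx.1.le))]
  congr 1
  simp only [Pi.sub_apply, zero_sub, neg_neg]
  rw [integral_const_mul, ← integral_Ioc_eq_integral_Ioo,
    ← intervalIntegral.integral_of_le zero_le_one, integral_id]
  ring

noncomputable def quadFactor (q T S x : ℝ) : ℝ :=
  (T + S - 1) * x ^ 2 + (1 - T - 2 * S + q * (S - 1 - T)) * x + (S + q * (T - S))

noncomputable def otherRoot (q T S r : ℝ) : ℝ :=
  -(1 - T - 2 * S + q * (S - 1 - T)) / (T + S - 1) - r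

section StagHunt

variable {q T S r : ℝ}

theorem P_eq_mul_quadFactor (x : ℝ) : P q T S x = x * quadFactor q T S x := by
  unfold P quadFactor; ring

theorem quadFactor_zero : quadFactor q T S 0 = S + q * (T - S) := by
  unfold quadFactor; ring

theorem quadFactor_one : quadFactor q T S 1 = -q := by
  unfold quadFactor; ring

theorem quadFactor_eq_mul_sub_mul_sub (ha : T + S - 1 ≠ 0) (hr : quadFactor q T S r = 0)
    (x : ℝ) : quadFactor q T S x = (T + S - 1) * (x - r) * (x - otherRoot q T S r) :=
  quadratic_eq_mul_sub_mul_sub ha hr rfl x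

theorem quadFactor_eq_zero_iff (ha : T + S - 1 ≠ 0) (hr : quadFactor q T S r = 0) {x : ℝ} :
    quadFactor q T S x = 0 ↔ x = r ∨ x = otherRoot q T S r :=
  quadratic_eq_zero_iff_of_root ha hr

theorem setOf_P_eq_zero_eq_insert (hq : q ≠ 0) (hc : S + q * (T - S) ≠ 0) :
    {x | x ∈ Icc (0 : ℝ) 1 ∧ P q T S x = 0} =
      insert 0 {x | x ∈ Ioo (0 : ℝ) 1 ∧ quadFactor q T S x = 0} := by
  ext x
  simp only [mem_ofPred_eq, mem_insert_iff, P_eq_mul_quadFactor, mul_eq_zero]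
  constructor
  · rintro ⟨hx, rfl | hQ⟩
    · exact .inl rfl
    · have hx0 : x ≠ 0 := by rintro rfl; exact hc (quadFactor_zero ▸ hQ)
      have hx1 : x ≠ 1 := by rintro rfl; exact hq (neg_eq_zero.1 (quadFactor_one ▸ hQ))
      exact .inr ⟨⟨hx.1.lt_of_ne' hx0, hx.2.lt_of_ne hx1⟩, hQ⟩
  · rintro (rfl | ⟨hx, hQ⟩)
    · exact ⟨left_mem_Icc.2 zero_le_one, .inl rfl⟩
    · exact ⟨Ioo_subset_Icc_self hx, .inr hQ⟩

theorem exists_setOf_quadFactor_eq_zero_eq_singleton (hq : 0 < q) (ha : T + S - 1 < 0)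
    (hc : 0 < S + q * (T - S)) :
    ∃ r ∈ Ioo (0 : ℝ) 1, {x | x ∈ Ioo (0 : ℝ) 1 ∧ quadFactor q T S x = 0} = {r} := by
  have hcont : ContinuousOn (quadFactor q T S) (Icc 0 1) := by
    unfold quadFactor; fun_prop
  have hsign : (0 : ℝ) ∈ Ioo (quadFactor q T S 1) (quadFactor q T S 0) := by
    rw [quadFactor_zero, quadFactor_one]; exact ⟨neg_neg_of_pos hq, hc⟩
  obtain ⟨r, hr01, hr⟩ := intermediate_value_Ioo' zero_le_one hcont hsign
  -- `Q 0 = a r s > 0` with `a < 0 < r` puts the other root below `0`.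
  have hs : otherRoot q T S r < 0 := by
    have h0 := quadFactor_eq_mul_sub_mul_sub ha.ne hr 0
    rw [quadFactor_zero] at h0
    nlinarith [mul_neg_of_neg_of_pos ha hr01.1]
  refine ⟨r, hr01, ?_⟩
  ext x
  simp only [mem_ofPred_eq, mem_singleton_iff, quadFactor_eq_zero_iff ha.ne hr]
  constructor
  · rintro ⟨hx, rfl | rfl⟩
    · rfl
    · exact absurd hx.1 hs.not_gt
  · rintro rfl; exact ⟨hr01, .inl rfl⟩

theorem nRoots_eq_two_of_pos (hq : 0 < q) (ha : T + S - 1 < 0) (hc : 0 < S + q * (T - S)) :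
    nRoots q T S = 2 := by
  obtain ⟨r, hr01, hr⟩ := exists_setOf_quadFactor_eq_zero_eq_singleton hq ha hc
  rw [nRoots, setOf_P_eq_zero_eq_insert hq.ne' hc.ne', hr, ncard_pair hr01.1.ne]

theorem discrim_eq_zero_of_nRoots_eq_two (hq : 0 < q) (ha : T + S - 1 < 0)
    (hc : S + q * (T - S) < 0) (h : nRoots q T S = 2) :
    discrim (T + S - 1) (1 - T - 2 * S + q * (S - 1 - T)) (S + q * (T - S)) = 0 := by
  rw [nRoots, setOf_P_eq_zero_eq_insert hq.ne' hc.ne] at h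
  obtain ⟨r, hr01, hr⟩ : {x | x ∈ Ioo (0 : ℝ) 1 ∧ quadFactor q T S x = 0}.Nonempty := by
    rw [nonempty_iff_ne_empty]
    rintro hempty
    rw [hempty, insert_empty_eq, ncard_singleton] at h
    exact absurd h (by norm_num)
  set s := otherRoot q T S r
  -- `Q 0 = a r s` and `Q 1 = a (1 - r) (1 - s)` are both negative, so `s ∈ (0, 1)` too.
  have hs0 : 0 < s := by
    have h0 := quadFactor_eq_mul_sub_mul_sub ha.ne hr 0
    rw [quadFactor_zero] at h0
    nlinarith [mul_neg_of_neg_of_pos ha hr01.1]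
  have hs1 : s < 1 := by
    have h1 := quadFactor_eq_mul_sub_mul_sub ha.ne hr 1
    rw [quadFactor_one] at h1
    nlinarith [mul_neg_of_neg_of_pos ha (sub_pos.2 hr01.2)]
  have hset : {x | x ∈ Ioo (0 : ℝ) 1 ∧ quadFactor q T S x = 0} = {r, s} := by
    ext x
    simp only [mem_ofPred_eq, mem_insert_iff, mem_singleton_iff, quadFactor_eq_zero_iff ha.ne hr]
    constructor
    · exact fun hx => hx.2
    · rintro (rfl | rfl)
      exacts [⟨hr01, .inl rfl⟩, ⟨⟨hs0, hs1⟩, .inr rfl⟩]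
  have hrs : r = s := by
    by_contra hrs
    rw [hset, ncard_eq_three.2 ⟨0, r, s, hr01.1.ne, hs0.ne, hrs, rfl⟩] at h
    exact absurd h (by norm_num)
  rw [discrim_eq_of_quadratic_eq_zero ha.ne hr hrs, sub_self, zero_pow two_ne_zero, mul_zero]

end StagHunt

section Measure

variable {q : ℝ}

theorem volume_setOf_quadFactor_zero_eq_zero (hq : q ≠ 1) :
    volume {p : ℝ × ℝ | p.2 + q * (p.1 - p.2) = 0} = 0 := by
  rw [Measure.volume_eq_prod]
  refine measure_prod_null_of_countable_slices _ _
    (measurableSet_eq_fun (by fun_prop) measurable_const) fun T => ?_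
  refine Subsingleton.countable fun S (hS : S + q * (T - S) = 0) S'
    (hS' : S' + q * (T - S') = 0) => ?_
  exact mul_left_cancel₀ (sub_ne_zero.2 hq.symm) (by linear_combination hS - hS')

theorem volume_setOf_discrim_eq_zero (hq : q ≠ 0) :
    volume {p : ℝ × ℝ | discrim (p.1 + p.2 - 1) (1 - p.1 - 2 * p.2 + q * (p.2 - 1 - p.1))
      (p.2 + q * (p.1 - p.2)) = 0} = 0 := by
  rw [Measure.volume_eq_prod]
  refine measure_prod_null_of_countable_slices _ _
    (measurableSet_eq_fun (by unfold discrim; fun_prop) measurable_const) fun T => ?_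
  -- As a polynomial in `S` the discriminant has leading coefficient `q ^ 2`.
  refine Finite.countable <| (finite_setOf_quadratic_eq_zero (pow_ne_zero 2 hq)
    (b := 2 * q * (1 - q) * (1 + T)) (c := (1 - T - q - q * T) ^ 2 - 4 * q * T * (T - 1))).subset
    fun S (hS : discrim _ _ _ = 0) => ?_
  rw [discrim] at hS
  show _ = _
  linear_combination hS

theorem volume_setOf_quadFactor_zero_pos (hq0 : 0 ≤ q) (hq2 : q ≤ 1 / 2) :
    volume {p : ℝ × ℝ | p.1 ∈ Ioo (0 : ℝ) 1 ∧ p.2 ∈ Ioo (-1 : ℝ) 0 ∧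
      0 < p.2 + q * (p.1 - p.2)} = ENNReal.ofReal (q / (2 * (1 - q))) := by
  have h1q : 0 < 1 - q := by linarith
  have hk0 : 0 ≤ q / (1 - q) := div_nonneg hq0 h1q.le
  have hk1 : q / (1 - q) ≤ 1 := (div_le_one h1q).2 (by linarith)
  have hlower (T S : ℝ) : -(q / (1 - q) * T) < S ↔ 0 < S + q * (T - S) := by
    rw [neg_lt_iff_pos_add, show S + q / (1 - q) * T = (S + q * (T - S)) / (1 - q) by
      field_simp; ring, div_pos_iff_of_pos_right h1q]
  have hset : {p : ℝ × ℝ | p.1 ∈ Ioo (0 : ℝ) 1 ∧ p.2 ∈ Ioo (-1 : ℝ) 0 ∧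
      0 < p.2 + q * (p.1 - p.2)} =
      regionBetween (fun T => -(q / (1 - q) * T)) (fun _ => 0) (Ioo 0 1) := by
    ext ⟨T, S⟩
    simp only [regionBetween, mem_ofPred_eq, mem_Ioo, ← hlower]
    constructor
    · rintro ⟨hT, ⟨-, hS⟩, hc⟩
      exact ⟨hT, hc, hS⟩
    · rintro ⟨hT, hc, hS⟩
      refine ⟨hT, ⟨?_, hS⟩, hc⟩
      linarith [mul_le_mul_of_nonneg_left hT.2.le hk0]
  rw [hset, volume_regionBetween_neg_mul_zero hk0, div_div, mul_comm]

end Measure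

theorem SH_two_equilibria (q : ℝ) (hq0 : 0 < q) (hq2 : q < 1 / 2) :
    volume {p : ℝ × ℝ | p.1 ∈ Ioo (0 : ℝ) 1 ∧ p.2 ∈ Ioo (-1 : ℝ) 0 ∧ nRoots q p.1 p.2 = 2} =
      ENNReal.ofReal (q / (2 * (1 - q))) := by
  have hneg {p : ℝ × ℝ} (hT : p.1 ∈ Ioo (0 : ℝ) 1) (hS : p.2 ∈ Ioo (-1 : ℝ) 0) :
      p.1 + p.2 - 1 < 0 := by linarith [hT.2, hS.2]
  rw [← volume_setOf_quadFactor_zero_pos hq0.le hq2.le]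
  refine (measure_eq_measure_of_null_sdiff ?_ ?_).symm
  · rintro p ⟨hT, hS, hc⟩
    exact ⟨hT, hS, nRoots_eq_two_of_pos hq0 (hneg hT hS) hc⟩
  refine measure_mono_null ?_ (measure_union_null
    (volume_setOf_quadFactor_zero_eq_zero (by linarith)) (volume_setOf_discrim_eq_zero hq0.ne'))
  rintro p ⟨⟨hT, hS, h⟩, hnot⟩
  rcases lt_trichotomy (p.2 + q * (p.1 - p.2)) 0 with hc | hc | hc
  · exact .inr (discrim_eq_zero_of_nRoots_eq_two hq0 (hneg hT hS) hc h)
  · exact .inl hc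
  · exact absurd ⟨hT, hS, hc⟩ hnot
end

section
/- Let 0 < q < 1/2. Let D = {(x,y) ∈ ℝ² : −1 < x < 0 and −x²/(4q) − q < y < −q}, and let D₁ be the interior of the convex hull of the four points A = (−1,−1), B = (−(1−q),−q), O = (0,0), C = (−q,−(1−q)). Then the two-dimensional Lebesgue measure of {(T,S) ∈ (0,1)×(−1,0) : P_{q,T,S} has exactly 3 distinct roots in [0,1]} equals (1/(1−2q)) times the two-dimensional Lebesgue measure of D ∩ D₁. -/
open MeasureTheory Set

/-!
Since `P q T S x = x * Q x` with `Q` quadratic, `Q(1) = -q < 0` and, in a Stag Hunt game,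
leading coefficient `T + S - 1 < 0`, the game has three equilibria exactly when `Q` has two
distinct roots in `(0, 1)`, i.e. when `Q(0) < 0` and the discriminant of `Q` is positive.
The affine map `(T, S) ↦ (x, y) = ((1-q)T + qS - (1-q), qT + (1-q)S - q)`, of Jacobian `1 - 2q`,
turns these two conditions into `y < -q` and `y > -x²/(4q) - q`, and maps the square
`(0,1) × (-1,0)` onto `D₁`; the change of variables formula gives the factor `1/(1 - 2q)`.
-/

section QuadraticRoots

variable {a b c : ℝ}

lemma quadratic_vieta {u v : ℝ} (hu : a * (u * u) + b * u + c = 0)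
    (hv : a * (v * v) + b * v + c = 0) (huv : u ≠ v) :
    b = -(a * (u + v)) ∧ c = a * (u * v) := by
  have hb : b = -(a * (u + v)) := by
    have h : (u - v) * (a * (u + v) + b) = 0 := by linear_combination hu - hv
    linarith [(mul_eq_zero.mp h).resolve_left (sub_ne_zero.mpr huv)]
  exact ⟨hb, by linear_combination hu - u * hb⟩

lemma quadratic_root_mem_Ioo (ha : a < 0) (habc : a + b + c < 0) (hbc : 0 < b + 2 * c)
    (hc : c < 0) {s : ℝ} (hs : discrim a b c = s * s) :
    (-b + s) / (2 * a) ∈ Ioo (0 : ℝ) 1 := by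
  rw [discrim] at hs
  have hb : 0 < b := by linarith
  have hs_lt : s < b :=
    (abs_lt_of_sq_lt_sq' (by nlinarith [mul_pos_of_neg_of_neg ha hc]) hb.le).2
  have hs_gt : 2 * a + b < s := by
    have := (abs_lt_of_sq_lt_sq' (a := s) (b := -(2 * a + b))
      (by nlinarith [mul_pos_of_neg_of_neg ha habc]) (by linarith)).1
    linarith
  exact ⟨div_pos_of_neg_of_neg (by linarith) (by linarith),
    (div_lt_one_of_neg (by linarith)).mpr (by linarith)⟩

lemma ncard_roots_Icc_eq_three_iff (ha : a < 0) (habc : a + b + c < 0) (hbc : 0 < b + 2 * c) :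
    {x : ℝ | x ∈ Icc 0 1 ∧ x * (a * (x * x) + b * x + c) = 0}.ncard = 3 ↔
      c < 0 ∧ 0 < discrim a b c := by
  set R := {x : ℝ | x ∈ Icc 0 1 ∧ x * (a * (x * x) + b * x + c) = 0}
  constructor
  · intro h
    have h0 : (0 : ℝ) ∈ R := ⟨left_mem_Icc.mpr zero_le_one, zero_mul _⟩
    obtain ⟨u, v, huv, hR⟩ : ∃ u v, u ≠ v ∧ R \ {0} = {u, v} := by
      rw [← ncard_eq_two, ncard_sdiff_singleton_of_mem h0, h]
    have positive_root : ∀ x ∈ R \ {0}, 0 < x ∧ a * (x * x) + b * x + c = 0 :=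
      fun x ⟨⟨hx, hPx⟩, hx0⟩ ↦ ⟨lt_of_le_of_ne hx.1 (Ne.symm hx0),
        (mul_eq_zero.mp hPx).resolve_left hx0⟩
    obtain ⟨hu, hQu⟩ := positive_root u (hR ▸ mem_insert u _)
    obtain ⟨hv, hQv⟩ := positive_root v (hR ▸ mem_insert_of_mem u rfl)
    obtain ⟨hb, hc⟩ := quadratic_vieta hQu hQv huv
    have hdisc : discrim a b c = (a * (u - v)) ^ 2 := by rw [discrim, hb, hc]; ring
    refine ⟨hc ▸ mul_neg_of_neg_of_pos ha (mul_pos hu hv), hdisc ▸ ?_⟩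
    exact pow_two_pos_of_ne_zero (mul_ne_zero ha.ne (sub_ne_zero.mpr huv))
  · rintro ⟨hc, hdisc⟩
    set s := √(discrim a b c)
    have hs : discrim a b c = s * s := (Real.mul_self_sqrt hdisc.le).symm
    have hs' : discrim a b c = -s * -s := by rw [neg_mul_neg]; exact hs
    have hs0 : 0 < s := Real.sqrt_pos.mpr hdisc
    have hr₁ := quadratic_root_mem_Ioo ha habc hbc hc hs
    have hr₂ := quadratic_root_mem_Ioo ha habc hbc hc hs'
    rw [← sub_eq_add_neg] at hr₂
    have hR : R = {0, (-b + s) / (2 * a), (-b - s) / (2 * a)} := by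
      ext x
      simp only [R, mem_ofPred_eq, mul_eq_zero, quadratic_eq_zero_iff ha.ne hs,
        mem_insert_iff, mem_singleton_iff]
      constructor
      · exact fun h ↦ h.2
      · rintro (rfl | rfl | rfl)
        · exact ⟨left_mem_Icc.mpr zero_le_one, Or.inl rfl⟩
        · exact ⟨Ioo_subset_Icc_self hr₁, Or.inr (Or.inl rfl)⟩
        · exact ⟨Ioo_subset_Icc_self hr₂, Or.inr (Or.inr rfl)⟩
    have hne : (-b + s) / (2 * a) ≠ (-b - s) / (2 * a) := by
      rw [Ne, div_left_inj' (by linarith)]; linarith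
    rw [hR, ncard_insert_of_notMem, ncard_pair hne]
    rintro (h | h)
    · exact hr₁.1.ne h
    · exact hr₂.1.ne h

end QuadraticRoots

lemma AffineEquiv.addHaar_preimage {E : Type*} [NormedAddCommGroup E] [NormedSpace ℝ E]
    [MeasurableSpace E] [BorelSpace E] [FiniteDimensional ℝ E] (μ : Measure E)
    [μ.IsAddHaarMeasure] (f : E ≃ᵃ[ℝ] E) (s : Set E) :
    μ (f ⁻¹' s) = ENNReal.ofReal |(LinearMap.det (f.linear : E →ₗ[ℝ] E))⁻¹| * μ s := by
  have hf : ⇑f = (· + f 0) ∘ (f.linear : E →ₗ[ℝ] E) := by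
    ext1 x; simpa using congrFun f.toAffineMap.decomp x
  rw [hf, preimage_comp,
    Measure.addHaar_preimage_linearMap μ (LinearEquiv.isUnit_det' _).ne_zero,
    measure_preimage_add_right]

lemma AffineEquiv.interior_convexHull_image {E F : Type*} [NormedAddCommGroup E]
    [NormedSpace ℝ E] [FiniteDimensional ℝ E] [NormedAddCommGroup F] [NormedSpace ℝ F]
    [FiniteDimensional ℝ F] (f : E ≃ᵃ[ℝ] F) (s : Set E) :
    interior (convexHull ℝ (f '' s)) = f '' interior (convexHull ℝ s) := by
  rw [← f.coe_toAffineMap, ← AffineMap.image_convexHull, f.coe_toAffineMap,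
    ← f.coe_toHomeomorphOfFiniteDimensional, Homeomorph.image_interior]

lemma interior_convexHull_prod_pair {a b c d : ℝ} (hab : a ≤ b) (hcd : c ≤ d) :
    interior (convexHull ℝ (({a, b} : Set ℝ) ×ˢ ({c, d} : Set ℝ))) = Ioo a b ×ˢ Ioo c d := by
  rw [convexHull_prod, convexHull_pair, convexHull_pair, segment_eq_Icc hab, segment_eq_Icc hcd,
    interior_prod_eq, interior_Icc, interior_Icc]

noncomputable def mutationLinear (q : ℝ) : ℝ × ℝ →ₗ[ℝ] ℝ × ℝ :=
  Matrix.toLin (Module.Basis.finTwoProd ℝ) (Module.Basis.finTwoProd ℝ) !![1 - q, q; q, 1 - q]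

lemma det_mutationLinear (q : ℝ) : LinearMap.det (mutationLinear q) = 1 - 2 * q := by
  rw [mutationLinear, LinearMap.det_toLin, Matrix.det_fin_two_of]; ring

noncomputable def mutationAffine {q : ℝ} (hq : 1 - 2 * q ≠ 0) : ℝ × ℝ ≃ᵃ[ℝ] ℝ × ℝ :=
  ((mutationLinear q).equivOfDetNeZero (by rwa [det_mutationLinear])).toAffineEquiv.trans
    (AffineEquiv.constVAdd ℝ (ℝ × ℝ) (-(1 - q), -q))

section MutationAffine

variable {q : ℝ} (hq : 1 - 2 * q ≠ 0)

lemma linear_mutationAffine :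
    ((mutationAffine hq).linear : ℝ × ℝ →ₗ[ℝ] ℝ × ℝ) = mutationLinear q :=
  rfl

lemma mutationAffine_apply (p : ℝ × ℝ) :
    mutationAffine hq p = ((1 - q) * p.1 + q * p.2 - (1 - q), q * p.1 + (1 - q) * p.2 - q) := by
  simp only [mutationAffine, mutationLinear, AffineEquiv.trans_apply, LinearEquiv.coe_toAffineEquiv,
    LinearEquiv.ofIsUnitDet_apply, Matrix.toLin_finTwoProd_apply, AffineEquiv.constVAdd_apply,
    vadd_eq_add, Prod.mk_add_mk, Prod.mk.injEq]
  constructor <;> ring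

lemma mutationAffine_image_corners :
    mutationAffine hq '' (({0, 1} : Set ℝ) ×ˢ ({-1, 0} : Set ℝ)) =
      {((-1 : ℝ), (-1 : ℝ)), (-(1 - q), -q), ((0 : ℝ), (0 : ℝ)), (-q, -(1 - q))} := by
  ext ⟨x, y⟩
  simp only [mem_image, mem_prod, mem_insert_iff, mem_singleton_iff, mutationAffine_apply,
    Prod.mk.injEq, Prod.exists, and_or_left, or_and_right, exists_or, and_assoc, exists_and_left,
    exists_eq_left]
  ring_nf
  tauto

lemma mutationAffine_preimage_interior_convexHull :
    mutationAffine hq ⁻¹' interior (convexHull ℝ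
      {((-1 : ℝ), (-1 : ℝ)), (-(1 - q), -q), ((0 : ℝ), (0 : ℝ)), (-q, -(1 - q))}) =
      Ioo (0 : ℝ) 1 ×ˢ Ioo (-1 : ℝ) 0 := by
  rw [← mutationAffine_image_corners hq, AffineEquiv.interior_convexHull_image,
    interior_convexHull_prod_pair zero_le_one (neg_nonpos.mpr zero_le_one),
    (mutationAffine hq).injective.preimage_image]

end MutationAffine

lemma nRoots_eq_three_iff {q T S : ℝ} (hq0 : 0 < q) (hq1 : q < 1) (hT : T ∈ Ioo (0 : ℝ) 1)
    (hS : S ∈ Ioo (-1 : ℝ) 0) :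
    nRoots q T S = 3 ↔ S + q * (T - S) < 0 ∧
      0 < discrim (T + S - 1) (1 - T - 2 * S + q * (S - 1 - T)) (S + q * (T - S)) := by
  obtain ⟨hT0, hT1⟩ := hT
  obtain ⟨hS0, hS1⟩ := hS
  have hP : ∀ x, P q T S x = x * ((T + S - 1) * (x * x) +
      (1 - T - 2 * S + q * (S - 1 - T)) * x + (S + q * (T - S))) := fun x ↦ by rw [P]; ring
  simp only [nRoots, hP]
  exact ncard_roots_Icc_eq_three_iff (by linarith) (by linarith)
    (by nlinarith [mul_pos (sub_pos.mpr hq1) (sub_pos.mpr hT1), mul_pos hq0 (neg_pos.mpr hS1)])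

lemma nRoots_eq_three_iff_mutationAffine_mem {q T S : ℝ} (hq0 : 0 < q) (hq1 : q < 1)
    (hq : 1 - 2 * q ≠ 0) (hT : T ∈ Ioo (0 : ℝ) 1) (hS : S ∈ Ioo (-1 : ℝ) 0) :
    nRoots q T S = 3 ↔ mutationAffine hq (T, S) ∈
      {p : ℝ × ℝ | -1 < p.1 ∧ p.1 < 0 ∧ -p.1 ^ 2 / (4 * q) - q < p.2 ∧ p.2 < -q} := by
  rw [nRoots_eq_three_iff hq0 hq1 hT hS, mutationAffine_apply]
  obtain ⟨hT0, hT1⟩ := hT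
  obtain ⟨hS0, hS1⟩ := hS
  set x := (1 - q) * T + q * S - (1 - q)
  set y := q * T + (1 - q) * S - q
  have hdisc : discrim (T + S - 1) (1 - T - 2 * S + q * (S - 1 - T)) (S + q * (T - S)) =
      x ^ 2 + 4 * q * (y + q) := by rw [discrim]; ring
  have hparabola : -x ^ 2 / (4 * q) - q < y ↔ 0 < x ^ 2 + 4 * q * (y + q) := by
    rw [sub_lt_iff_lt_add, div_lt_iff₀ (by positivity)]; constructor <;> intro h <;> linarith
  simp only [mem_ofPred_eq, hdisc, hparabola]
  constructor
  · rintro ⟨hc, hd⟩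
    exact ⟨by nlinarith [mul_pos (sub_pos.mpr hq1) hT0, mul_pos hq0 (neg_lt_iff_pos_add.mp hS0)],
      by nlinarith [mul_pos (sub_pos.mpr hq1) (sub_pos.mpr hT1), mul_pos hq0 (neg_pos.mpr hS1)],
      hd, by linarith⟩
  · rintro ⟨-, -, hd, hc⟩
    exact ⟨by linarith, hd⟩

lemma three_equilibria_eq_preimage_mutationAffine {q : ℝ} (hq0 : 0 < q) (hq1 : q < 1)
    (hq : 1 - 2 * q ≠ 0) :
    {p : ℝ × ℝ | p.1 ∈ Ioo (0 : ℝ) 1 ∧ p.2 ∈ Ioo (-1 : ℝ) 0 ∧ nRoots q p.1 p.2 = 3} =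
      mutationAffine hq ⁻¹'
        ({p : ℝ × ℝ | -1 < p.1 ∧ p.1 < 0 ∧ -p.1 ^ 2 / (4 * q) - q < p.2 ∧ p.2 < -q} ∩
          interior (convexHull ℝ
            {((-1 : ℝ), (-1 : ℝ)), (-(1 - q), -q), ((0 : ℝ), (0 : ℝ)), (-q, -(1 - q))})) := by
  rw [preimage_inter, mutationAffine_preimage_interior_convexHull]
  ext ⟨T, S⟩
  rw [mem_inter_iff, mem_preimage, mem_prod]
  constructor
  · rintro ⟨hT, hS, h3⟩
    exact ⟨(nRoots_eq_three_iff_mutationAffine_mem hq0 hq1 hq hT hS).mp h3, hT, hS⟩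
  · rintro ⟨h, hT, hS⟩
    exact ⟨hT, hS, (nRoots_eq_three_iff_mutationAffine_mem hq0 hq1 hq hT hS).mpr h⟩

theorem SH_three_equilibria_area (q : ℝ) (hq0 : 0 < q) (hq2 : q < 1 / 2) :
    volume {p : ℝ × ℝ | p.1 ∈ Ioo (0 : ℝ) 1 ∧ p.2 ∈ Ioo (-1 : ℝ) 0 ∧ nRoots q p.1 p.2 = 3} =
      ENNReal.ofReal (1 / (1 - 2 * q)) *
        volume ({p : ℝ × ℝ | -1 < p.1 ∧ p.1 < 0 ∧ -p.1 ^ 2 / (4 * q) - q < p.2 ∧ p.2 < -q} ∩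
          interior (convexHull ℝ
            {((-1 : ℝ), (-1 : ℝ)), (-(1 - q), -q), ((0 : ℝ), (0 : ℝ)), (-q, -(1 - q))})) := by
  have hjac : 0 < 1 - 2 * q := by linarith
  rw [three_equilibria_eq_preimage_mutationAffine hq0 (by linarith) hjac.ne',
    AffineEquiv.addHaar_preimage, linear_mutationAffine, det_mutationLinear,
    abs_of_pos (inv_pos.mpr hjac), one_div]
end

section
/- Let 0 < q < 1/2. Let D = {(x,y) ∈ ℝ² : −1 < x < 0 and −x²/(4q) − q < y < −q}, and let D₂ be the interior of the triangle with vertices M = (−q,−(1−q)), N = (0,−(1−2q)/(1−q)), O = (0,0). Then the two-dimensional Lebesgue measure of {(T,S) ∈ (1,2)×(−1,0) : P_{q,T,S} has exactly 3 distinct roots in [0,1]} equals (1/(1−2q)) times the two-dimensional Lebesgue measure of D ∩ D₂. -/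
open MeasureTheory Set

theorem vieta_of_roots {R : Type*} [CommRing R] [NoZeroDivisors R] {a b c r s : R} (hrs : r ≠ s)
    (hr : a * (r * r) + b * r + c = 0) (hs : a * (s * s) + b * s + c = 0) :
    b = -a * (r + s) ∧ c = a * r * s := by
  have hsum : a * (r + s) + b = 0 := by
    have : (r - s) * (a * (r + s) + b) = 0 := by linear_combination hr - hs
    exact (mul_eq_zero.mp this).resolve_left (sub_ne_zero.mpr hrs)
  exact ⟨by linear_combination hsum, by linear_combination hr - r * hsum⟩

theorem exists_vieta_of_discrim_eq_mul_self {K : Type*} [Field K] [NeZero (2 : K)] {a b c d : K}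
    (ha : a ≠ 0) (hd : discrim a b c = d * d) : ∃ r s, b = -a * (r + s) ∧ c = a * r * s := by
  obtain ⟨r, hr⟩ := exists_quadratic_eq_zero ha ⟨d, hd⟩
  have hb : a * (-b / a) = -b := by field_simp
  exact ⟨r, -b / a - r, by linear_combination hb, by linear_combination hr - r * hb⟩

theorem pos_and_pos_of_add_pos_of_mul_pos {α : Type*} [Ring α] [LinearOrder α]
    [IsStrictOrderedRing α] {x y : α} (hs : 0 < x + y) (hp : 0 < x * y) : 0 < x ∧ 0 < y :=
  (pos_and_pos_or_neg_and_neg_of_mul_pos hp).resolve_right fun h => (add_neg h.1 h.2).asymm hs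

section RealQuadratic

variable {a b c r s : ℝ}

theorem roots_mem_Ioo_iff_of_vieta (hb : b = -a * (r + s)) (hc : c = a * r * s)
    (h1 : a + b + c < 0) :
    (r ≠ s ∧ r ∈ Ioo 0 1 ∧ s ∈ Ioo 0 1) ↔ c < 0 ∧ 0 < b + 2 * c ∧ 0 < discrim a b c := by
  subst hb hc
  have hdisc : discrim a (-a * (r + s)) (a * r * s) = (a * (r - s)) ^ 2 := by
    rw [discrim]; ring
  have hQ1 : a * ((1 - r) * (1 - s)) < 0 := by linarith
  constructor
  · rintro ⟨hrs, ⟨hr0, hr1⟩, ⟨hs0, hs1⟩⟩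
    have ha : a < 0 := neg_of_mul_neg_left hQ1 (mul_pos (sub_pos.mpr hr1) (sub_pos.mpr hs1)).le
    refine ⟨mul_neg_of_neg_of_pos (mul_neg_of_neg_of_pos ha hr0) hs0, ?_, ?_⟩
    · -- `b + 2c = -a (r (1 - s) + s (1 - r))`
      nlinarith [mul_pos hr0 (sub_pos.mpr hs1), mul_pos hs0 (sub_pos.mpr hr1)]
    · have : a * (r - s) ≠ 0 := mul_ne_zero ha.ne (sub_ne_zero.mpr hrs)
      rw [hdisc]; positivity
  · rintro ⟨hc, hbc, hd⟩
    have ha : a < 0 := by linarith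
    have hrs : r ≠ s := by rintro rfl; rw [hdisc] at hd; simp at hd
    obtain ⟨hr0, hs0⟩ := pos_and_pos_of_add_pos_of_mul_pos
      (pos_of_mul_neg_right (by linarith : a * (r + s) < 0) ha.le)
      (pos_of_mul_neg_right (by linarith : a * (r * s) < 0) ha.le)
    obtain ⟨hr1, hs1⟩ := pos_and_pos_of_add_pos_of_mul_pos
      (pos_of_mul_neg_right (by linarith : a * ((1 - r) + (1 - s)) < 0) ha.le)
      (pos_of_mul_neg_right hQ1 ha.le)
    exact ⟨hrs, ⟨hr0, by linarith⟩, ⟨hs0, by linarith⟩⟩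

theorem ncard_roots_Ioo_eq_two_iff (h1 : a + b + c < 0) :
    {x | x ∈ Ioo (0 : ℝ) 1 ∧ a * (x * x) + b * x + c = 0}.ncard = 2 ↔
      c < 0 ∧ 0 < b + 2 * c ∧ 0 < discrim a b c := by
  constructor
  · intro h
    obtain ⟨r, s, hrs, hset⟩ := ncard_eq_two.mp h
    have hr : r ∈ {x | x ∈ Ioo (0 : ℝ) 1 ∧ a * (x * x) + b * x + c = 0} :=
      hset ▸ mem_insert r {s}
    have hs : s ∈ {x | x ∈ Ioo (0 : ℝ) 1 ∧ a * (x * x) + b * x + c = 0} :=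
      hset ▸ mem_insert_of_mem r rfl
    obtain ⟨hb, hc⟩ := vieta_of_roots hrs hr.2 hs.2
    exact (roots_mem_Ioo_iff_of_vieta hb hc h1).mp ⟨hrs, hr.1, hs.1⟩
  · intro h
    have ha : a < 0 := by linarith [h.1, h.2.1]
    obtain ⟨r, s, hb, hc⟩ :=
      exists_vieta_of_discrim_eq_mul_self ha.ne (Real.mul_self_sqrt h.2.2.le).symm
    obtain ⟨hrs, hr, hs⟩ := (roots_mem_Ioo_iff_of_vieta hb hc h1).mpr h
    have hfactor : ∀ x, a * (x * x) + b * x + c = a * ((x - r) * (x - s)) := by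
      intro x; rw [hb, hc]; ring
    have hset : {x | x ∈ Ioo (0 : ℝ) 1 ∧ a * (x * x) + b * x + c = 0} = {r, s} := by
      ext x
      simp only [mem_ofPred_eq, hfactor, mul_eq_zero, ha.ne, false_or, sub_eq_zero, mem_insert_iff,
        mem_singleton_iff]
      exact and_iff_right_of_imp (by rintro (rfl | rfl) <;> assumption)
    rw [hset, ncard_pair hrs]

theorem ncard_roots_Icc_mul_eq_three_iff (h1 : a + b + c < 0) :
    {x | x ∈ Icc (0 : ℝ) 1 ∧ x * (a * (x * x) + b * x + c) = 0}.ncard = 3 ↔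
      c < 0 ∧ 0 < b + 2 * c ∧ 0 < discrim a b c := by
  have h0 : (0 : ℝ) ∈ {x | x ∈ Icc (0 : ℝ) 1 ∧ x * (a * (x * x) + b * x + c) = 0} :=
    ⟨left_mem_Icc.mpr zero_le_one, zero_mul _⟩
  have hdiff : {x | x ∈ Icc (0 : ℝ) 1 ∧ x * (a * (x * x) + b * x + c) = 0} \ {0} =
      {x | x ∈ Ioo (0 : ℝ) 1 ∧ a * (x * x) + b * x + c = 0} := by
    ext x
    simp only [mem_sdiff, mem_ofPred_eq, mem_singleton_iff, mem_Icc, mem_Ioo, mul_eq_zero]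
    constructor
    · rintro ⟨⟨⟨hx0, hx1⟩, hx | hx⟩, hne⟩
      · exact absurd hx hne
      · refine ⟨⟨lt_of_le_of_ne hx0 (Ne.symm hne), lt_of_le_of_ne hx1 ?_⟩, hx⟩
        rintro rfl
        linarith
    · rintro ⟨⟨hx0, hx1⟩, hx⟩
      exact ⟨⟨⟨hx0.le, hx1.le⟩, Or.inr hx⟩, hx0.ne'⟩
  rw [← ncard_roots_Ioo_eq_two_iff h1, ← hdiff, ncard_sdiff_singleton_of_mem h0]
  omega

theorem P_eq_mul_quadratic (q T S x : ℝ) :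
    P q T S x = x * ((T + S - 1) * (x * x) + (1 - T - 2 * S + q * (S - 1 - T)) * x +
      (S + q * (T - S))) := by
  unfold P; ring

theorem nRoots_eq_three_iff_s7 {q T S u v : ℝ} (hq : 0 < q) (hu : u = (1 - q) * (T - 1) + q * S)
    (hv : v = q * (T - 1) + (1 - q) * S) :
    nRoots q T S = 3 ↔ u < 0 ∧ v < -q ∧ 0 < u ^ 2 + 4 * q * (v + q) := by
  have h1 : (T + S - 1) + (1 - T - 2 * S + q * (S - 1 - T)) + (S + q * (T - S)) < 0 := by
    linarith
  simp only [nRoots, P_eq_mul_quadratic]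
  rw [ncard_roots_Icc_mul_eq_three_iff h1, discrim]
  subst hu hv
  constructor
  · rintro ⟨hc, hbc, hd⟩; exact ⟨by linarith, by linarith, by linarith⟩
  · rintro ⟨hu, hv, hd⟩; exact ⟨by linarith, by linarith, by linarith⟩

end RealQuadratic

theorem mem_convexHull_triple {E : Type*} [AddCommGroup E] [Module ℝ E] {x y z p : E} {a b c : ℝ}
    (ha : 0 ≤ a) (hb : 0 ≤ b) (hc : 0 ≤ c) (habc : a + b + c = 1)
    (hp : a • x + b • y + c • z = p) : p ∈ convexHull ℝ {x, y, z} := by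
  subst hp
  have := (convex_convexHull ℝ {x, y, z}).sum_mem (t := Finset.univ) (w := ![a, b, c])
    (z := ![x, y, z]) (by intro i _; fin_cases i <;> assumption)
    (by simpa [Fin.sum_univ_three] using habc)
    (by intro i _; fin_cases i <;> apply subset_convexHull <;> simp)
  simpa [Fin.sum_univ_three] using this

theorem interior_setOf_le_of_ne_zero {E : Type*} [AddCommGroup E] [TopologicalSpace E]
    [ContinuousAdd E] [Module ℝ E] [ContinuousSMul ℝ E] (ℓ : StrongDual ℝ E) (hℓ : ℓ ≠ 0)
    (c : ℝ) : interior {x | ℓ x ≤ c} = {x | ℓ x < c} := by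
  have := (ℓ.isOpenMap_of_ne_zero hℓ).preimage_interior_eq_interior_preimage ℓ.continuous (Iic c)
  rw [interior_Iic] at this
  exact this.symm

theorem interior_halfPlane {α β : ℝ} (h : α ≠ 0 ∨ β ≠ 0) (c : ℝ) :
    interior {p : ℝ × ℝ | α * p.1 + β * p.2 ≤ c} = {p | α * p.1 + β * p.2 < c} := by
  refine interior_setOf_le_of_ne_zero
    (α • ContinuousLinearMap.fst ℝ ℝ ℝ + β • ContinuousLinearMap.snd ℝ ℝ ℝ) ?_ c
  intro h0
  have h10 := congrArg (fun ℓ : StrongDual ℝ (ℝ × ℝ) => ℓ (1, 0)) h0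
  have h01 := congrArg (fun ℓ : StrongDual ℝ (ℝ × ℝ) => ℓ (0, 1)) h0
  simp only [add_apply, smul_apply, ContinuousLinearMap.coe_fst', ContinuousLinearMap.coe_snd',
    zero_apply, smul_eq_mul, mul_one, mul_zero, add_zero, zero_add] at h10 h01
  exact h.elim (· h10) (· h01)

theorem convex_halfPlane (α β c : ℝ) : Convex ℝ {p : ℝ × ℝ | α * p.1 + β * p.2 ≤ c} :=
  convex_halfSpace_le ⟨fun p p' => by simp only [Prod.fst_add, Prod.snd_add]; ring,
    fun r p => by simp only [Prod.smul_fst, Prod.smul_snd, smul_eq_mul]; ring⟩ c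

theorem convexHull_triangle {q : ℝ} (hq0 : 0 < q) (hq2 : q < 1 / 2) :
    convexHull ℝ {((-q : ℝ), -(1 - q)), ((0 : ℝ), -(1 - 2 * q) / (1 - q)), ((0 : ℝ), (0 : ℝ))} =
      {p : ℝ × ℝ | 1 * p.1 + 0 * p.2 ≤ 0} ∩ {p | -(1 - q) * p.1 + q * p.2 ≤ 0} ∩
        {p | q * p.1 + -(1 - q) * p.2 ≤ 1 - 2 * q} := by
  have h1q : 0 < 1 - q := by linarith
  have h2q : 0 < 1 - 2 * q := by linarith
  apply Subset.antisymm
  · refine convexHull_min ?_ (((convex_halfPlane _ _ _).inter (convex_halfPlane _ _ _)).inter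
      (convex_halfPlane _ _ _))
    have hN : (1 - q) * (-(1 - 2 * q) / (1 - q)) = -(1 - 2 * q) := by field_simp
    rintro p (rfl | rfl | rfl) <;> simp only [mem_inter_iff, mem_ofPred_eq]
    · exact ⟨⟨by linarith, by nlinarith⟩, by nlinarith⟩
    · have : 0 ≤ (1 - 2 * q) / (1 - q) := by positivity
      exact ⟨⟨by linarith, by nlinarith⟩, by linarith⟩
    · exact ⟨⟨by linarith, by linarith⟩, by linarith⟩
  · have h2q' : 1 - q * 2 ≠ 0 := by linarith
    rintro ⟨x, y⟩ ⟨⟨h1, h2⟩, h3⟩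
    simp only [mem_ofPred_eq] at h1 h2 h3
    -- the barycentric coordinates of `(x, y)`
    refine mem_convexHull_triple (a := -x / q)
      (b := (1 - q) * ((1 - q) * x - q * y) / (q * (1 - 2 * q)))
      (c := ((1 - 2 * q) - q * x + (1 - q) * y) / (1 - 2 * q))
      (div_nonneg (by linarith) hq0.le) (div_nonneg (by nlinarith) (by positivity))
      (div_nonneg (by linarith) h2q.le) (by field_simp; ring) ?_
    ext <;> simp only [Prod.smul_mk, Prod.mk_add_mk, smul_eq_mul] <;> field_simp <;> ring

theorem interior_convexHull_triangle {q : ℝ} (hq0 : 0 < q) (hq2 : q < 1 / 2) :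
    interior (convexHull ℝ
        {((-q : ℝ), -(1 - q)), ((0 : ℝ), -(1 - 2 * q) / (1 - q)), ((0 : ℝ), (0 : ℝ))}) =
      {p : ℝ × ℝ | p.1 < 0 ∧ q * p.2 < (1 - q) * p.1 ∧ q * p.1 - (1 - 2 * q) < (1 - q) * p.2} := by
  rw [convexHull_triangle hq0 hq2, interior_inter, interior_inter,
    interior_halfPlane (by norm_num), interior_halfPlane (by left; linarith),
    interior_halfPlane (by left; linarith)]
  ext p
  simp only [mem_inter_iff, mem_ofPred_eq]
  constructor
  · rintro ⟨⟨h1, h2⟩, h3⟩; exact ⟨by linarith, by linarith, by linarith⟩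
  · rintro ⟨h1, h2, h3⟩; exact ⟨⟨by linarith, by linarith⟩, by linarith⟩

theorem addHaar_preimage_linearMap_comp_sub {E : Type*} [NormedAddCommGroup E] [NormedSpace ℝ E]
    [MeasurableSpace E] [BorelSpace E] [FiniteDimensional ℝ E] (μ : Measure E)
    [μ.IsAddHaarMeasure] {f : E →ₗ[ℝ] E} (hf : LinearMap.det f ≠ 0) (v : E) (s : Set E) :
    μ ((fun x => f (x - v)) ⁻¹' s) = ENNReal.ofReal |(LinearMap.det f)⁻¹| * μ s := by
  rw [show (fun x => f (x - v)) ⁻¹' s = (· + -v) ⁻¹' (f ⁻¹' s) by ext; simp [sub_eq_add_neg],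
    measure_preimage_add_right, Measure.addHaar_preimage_linearMap μ hf]

noncomputable def mutationMap (q : ℝ) : ℝ × ℝ →ₗ[ℝ] ℝ × ℝ :=
  Matrix.toLin (Module.Basis.finTwoProd ℝ) (Module.Basis.finTwoProd ℝ) !![1 - q, q; q, 1 - q]

theorem mutationMap_apply (q : ℝ) (p : ℝ × ℝ) :
    mutationMap q p = ((1 - q) * p.1 + q * p.2, q * p.1 + (1 - q) * p.2) := by
  simp [mutationMap, Matrix.toLin_finTwoProd_apply]

theorem det_mutationMap (q : ℝ) : LinearMap.det (mutationMap q) = 1 - 2 * q := by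
  rw [mutationMap, LinearMap.det_toLin, Matrix.det_fin_two_of]; ring

theorem setOf_three_equilibria_eq_preimage {q : ℝ} (hq0 : 0 < q) (hq2 : q < 1 / 2) :
    {p : ℝ × ℝ | p.1 ∈ Ioo (1 : ℝ) 2 ∧ p.2 ∈ Ioo (-1 : ℝ) 0 ∧ nRoots q p.1 p.2 = 3} =
      (fun p => mutationMap q (p - (1, 0))) ⁻¹'
        ({p : ℝ × ℝ | -1 < p.1 ∧ p.1 < 0 ∧ -p.1 ^ 2 / (4 * q) - q < p.2 ∧ p.2 < -q} ∩
          {p | p.1 < 0 ∧ q * p.2 < (1 - q) * p.1 ∧ q * p.1 - (1 - 2 * q) < (1 - q) * p.2}) := by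
  have h1q : 0 < 1 - q := by linarith
  have h2q : 0 < 1 - 2 * q := by linarith
  ext ⟨T, S⟩
  simp only [mem_ofPred_eq, mem_preimage, mem_inter_iff, mem_Ioo, Prod.mk_sub_mk, sub_zero,
    mutationMap_apply]
  rw [nRoots_eq_three_iff_s7 hq0 rfl rfl]
  set u := (1 - q) * (T - 1) + q * S
  set v := q * (T - 1) + (1 - q) * S
  have hdisc : -u ^ 2 / (4 * q) - q < v ↔ 0 < u ^ 2 + 4 * q * (v + q) := by
    rw [sub_lt_iff_lt_add, div_lt_iff₀ (by positivity)]
    constructor <;> intro h <;> linarith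
  have hT : (1 - q) * u - q * v = (1 - 2 * q) * (T - 1) := by ring
  have hS : (1 - q) * v - q * u = (1 - 2 * q) * S := by ring
  rw [hdisc]
  constructor
  · rintro ⟨⟨hT1, hT2⟩, ⟨hS1, hS2⟩, hu, hv, hd⟩
    refine ⟨⟨?_, hu, hd, hv⟩, hu, ?_, ?_⟩
    · linarith [mul_pos h1q (sub_pos.mpr hT1), mul_pos hq0 (by linarith : 0 < S + 1)]
    · linarith [mul_pos h2q (sub_pos.mpr hT1)]
    · linarith [mul_pos h2q (by linarith : 0 < S + 1)]
  · rintro ⟨⟨-, hu, hd, hv⟩, -, h2, h3⟩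
    have hT1 : 0 < T - 1 := pos_of_mul_pos_right (by linarith : 0 < (1 - 2 * q) * (T - 1)) h2q.le
    have hS1 : 0 < S + 1 := pos_of_mul_pos_right (by linarith : 0 < (1 - 2 * q) * (S + 1)) h2q.le
    refine ⟨⟨by linarith, ?_⟩, ⟨by linarith, ?_⟩, hu, hv, hd⟩
    · nlinarith [mul_pos hq0 hS1]
    · nlinarith [mul_pos hq0 hT1]

theorem PD_three_equilibria_area (q : ℝ) (hq0 : 0 < q) (hq2 : q < 1 / 2) :
    volume {p : ℝ × ℝ | p.1 ∈ Ioo (1 : ℝ) 2 ∧ p.2 ∈ Ioo (-1 : ℝ) 0 ∧ nRoots q p.1 p.2 = 3} =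
      ENNReal.ofReal (1 / (1 - 2 * q)) *
        volume ({p : ℝ × ℝ | -1 < p.1 ∧ p.1 < 0 ∧ -p.1 ^ 2 / (4 * q) - q < p.2 ∧ p.2 < -q} ∩
          interior (convexHull ℝ
            {((-q : ℝ), -(1 - q)), ((0 : ℝ), -(1 - 2 * q) / (1 - q)), ((0 : ℝ), (0 : ℝ))})) := by
  rw [interior_convexHull_triangle hq0 hq2, setOf_three_equilibria_eq_preimage hq0 hq2,
    addHaar_preimage_linearMap_comp_sub volume (by rw [det_mutationMap]; linarith),
    det_mutationMap, abs_of_pos (by rw [inv_pos]; linarith), one_div]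
end

section
/- Let 0 < q < 1/2. Then the two-dimensional Lebesgue measure of the set {(T,S) ∈ (1,2)×(−1,0) : P_{q,T,S} has exactly 3 distinct roots in [0,1]} is at most q/(2(1−q)). In particular, this measure is at most 1/2 and tends to 0 as q tends to 0. -/
open MeasureTheory Set

/-!
Since `P q T S x = x * Q q T S x` with `Q q T S 1 = -q < 0`, three roots in `[0,1]` means `0`
together with two distinct roots `u, v ∈ (0,1)` of the quadratic `Q = a x² + b x + c`. By Vieta,
`a (1-u)(1-v) = Q 1 < 0` forces `a < 0`, and then `b + 2c = -a (u(1-v) + v(1-u)) > 0`, which reads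
`(1 - q)(T - 1) < q (-S)`. So in the PD square the pairs with three equilibria lie in the triangle
`1 < T < 1 + q (-S) / (1 - q)`, `-1 < S < 0`, of area `q / (2(1 - q))`.
-/

noncomputable def Q (q T S x : ℝ) : ℝ :=
  (T + S - 1) * x ^ 2 + (1 - T - 2 * S + q * (S - 1 - T)) * x + (S + q * (T - S))

lemma P_eq_mul_Q (q T S x : ℝ) : P q T S x = x * Q q T S x := by
  unfold P Q; ring

lemma Q_one (q T S : ℝ) : Q q T S 1 = -q := by
  unfold Q; ring

lemma add_two_mul_pos_of_two_roots_mem_Ioo {a b c u v : ℝ}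
    (hu : u ∈ Ioo (0 : ℝ) 1) (hv : v ∈ Ioo (0 : ℝ) 1) (huv : u ≠ v)
    (hQu : a * u ^ 2 + b * u + c = 0) (hQv : a * v ^ 2 + b * v + c = 0)
    (h1 : a + b + c < 0) : 0 < b + 2 * c := by
  have hsum : b = -a * (u + v) := by
    have : (u - v) * (a * (u + v) + b) = 0 := by linear_combination hQu - hQv
    linarith [(mul_eq_zero.1 this).resolve_left (sub_ne_zero.2 huv)]
  have hprod : c = a * u * v := by linear_combination hQu - u * hsum
  have hu' : 0 < 1 - u := by linarith [hu.2]
  have hv' : 0 < 1 - v := by linarith [hv.2]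
  have ha : a < 0 := by
    have : a * ((1 - u) * (1 - v)) = a + b + c := by rw [hsum, hprod]; ring
    exact neg_of_mul_neg_left (this ▸ h1) (mul_pos hu' hv').le
  have : 0 < u * (1 - v) + v * (1 - u) := by
    have := mul_pos hu.1 hv'; have := mul_pos hv.1 hu'; linarith
  calc 0 < -a * (u * (1 - v) + v * (1 - u)) := mul_pos (neg_pos.2 ha) this
    _ = b + 2 * c := by rw [hsum, hprod]; ring

lemma mem_Ioo_of_P_eq_zero {q T S x : ℝ} (hq : 0 < q) (hx : x ∈ Icc (0 : ℝ) 1) (hx0 : x ≠ 0)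
    (hPx : P q T S x = 0) : x ∈ Ioo (0 : ℝ) 1 ∧ Q q T S x = 0 := by
  have hQx : Q q T S x = 0 := by
    rw [P_eq_mul_Q] at hPx
    exact (mul_eq_zero.1 hPx).resolve_left hx0
  have hx1 : x ≠ 1 := by
    rintro rfl
    linarith [Q_one q T S]
  exact ⟨⟨hx.1.lt_of_ne' hx0, hx.2.lt_of_ne hx1⟩, hQx⟩

lemma exists_two_roots_mem_Ioo_of_nRoots_eq_three {q T S : ℝ} (hq : 0 < q)
    (h3 : nRoots q T S = 3) :
    ∃ u v, u ≠ v ∧ u ∈ Ioo (0 : ℝ) 1 ∧ v ∈ Ioo (0 : ℝ) 1 ∧ Q q T S u = 0 ∧ Q q T S v = 0 := by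
  set s := {x : ℝ | x ∈ Icc (0 : ℝ) 1 ∧ P q T S x = 0}
  have h0 : (0 : ℝ) ∈ s := ⟨left_mem_Icc.2 zero_le_one, by simp [P]⟩
  have h2 : (s \ {0}).ncard = 2 := by
    rw [ncard_sdiff_singleton_of_mem h0]
    exact congrArg (· - 1) h3
  obtain ⟨u, v, huv, hs⟩ := ncard_eq_two.1 h2
  have hu : u ∈ s \ {0} := hs ▸ mem_insert u {v}
  have hv : v ∈ s \ {0} := hs ▸ mem_insert_of_mem u rfl
  obtain ⟨hu, hQu⟩ := mem_Ioo_of_P_eq_zero hq hu.1.1 hu.2 hu.1.2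
  obtain ⟨hv, hQv⟩ := mem_Ioo_of_P_eq_zero hq hv.1.1 hv.2 hv.1.2
  exact ⟨u, v, huv, hu, hv, hQu, hQv⟩

lemma one_sub_mul_lt_of_nRoots_eq_three {q T S : ℝ} (hq : 0 < q) (h3 : nRoots q T S = 3) :
    (1 - q) * (T - 1) < q * -S := by
  obtain ⟨u, v, huv, hu, hv, hQu, hQv⟩ := exists_two_roots_mem_Ioo_of_nRoots_eq_three hq h3
  have hQ1 := Q_one q T S
  unfold Q at hQu hQv hQ1
  have := add_two_mul_pos_of_two_roots_mem_Ioo hu hv huv hQu hQv (by linarith)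
  linarith

lemma volume_triangle {k : ℝ} (hk : 0 ≤ k) :
    volume (Prod.swap ⁻¹' regionBetween (fun _ => 1) (fun s => 1 - k * s) (Ioo (-1 : ℝ) 0)) =
      ENNReal.ofReal (k / 2) := by
  set f : ℝ → ℝ := fun s => 1 - k * s
  have hmeas : MeasurableSet (regionBetween (fun _ => 1) f (Ioo (-1 : ℝ) 0)) :=
    measurableSet_regionBetween measurable_const (by fun_prop) measurableSet_Ioo
  have hone_int : IntegrableOn (fun _ => (1 : ℝ)) (Ioo (-1 : ℝ) 0) :=
    continuous_const.integrableOn_Icc.mono_set Ioo_subset_Icc_self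
  have hf_int : IntegrableOn f (Ioo (-1 : ℝ) 0) :=
    (by fun_prop : Continuous f).integrableOn_Icc.mono_set Ioo_subset_Icc_self
  rw [Measure.volume_eq_prod,
    Measure.measurePreserving_swap.measure_preimage hmeas.nullMeasurableSet,
    volume_regionBetween_eq_integral hone_int hf_int measurableSet_Ioo
      (fun s hs => by nlinarith [hs.2])]
  congr 1
  rw [← integral_Ioc_eq_integral_Ioo, ← intervalIntegral.integral_of_le (by norm_num)]
  simp only [f, Pi.sub_apply, sub_sub_cancel_left, intervalIntegral.integral_neg]
  rw [intervalIntegral.integral_const_mul, integral_id]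
  ring

lemma volume_three_equilibria_le {q : ℝ} (hq0 : 0 < q) (hq1 : q < 1) :
    volume {p : ℝ × ℝ | p.1 ∈ Ioo (1 : ℝ) 2 ∧ p.2 ∈ Ioo (-1 : ℝ) 0 ∧ nRoots q p.1 p.2 = 3} ≤
      ENNReal.ofReal (q / (2 * (1 - q))) := by
  have h1q : 0 < 1 - q := by linarith
  calc _ ≤ volume (Prod.swap ⁻¹'
        regionBetween (fun _ => 1) (fun s => 1 - q / (1 - q) * s) (Ioo (-1 : ℝ) 0)) := by
        refine measure_mono fun ⟨T, S⟩ ⟨hT, hS, h3⟩ => ⟨hS, hT.1, ?_⟩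
        have := one_sub_mul_lt_of_nRoots_eq_three hq0 h3
        have hT' : T - 1 < q * -S / (1 - q) := by rw [lt_div_iff₀ h1q]; linarith
        show T < 1 - q / (1 - q) * S
        linarith [show q / (1 - q) * S = -(q * -S / (1 - q)) by ring]
    _ = ENNReal.ofReal (q / (2 * (1 - q))) := by
        rw [volume_triangle (div_nonneg hq0.le h1q.le), div_div, mul_comm]

theorem PD_three_equilibria_bound :
    (∀ q : ℝ, 0 < q → q < 1 / 2 →
      volume {p : ℝ × ℝ | p.1 ∈ Ioo (1 : ℝ) 2 ∧ p.2 ∈ Ioo (-1 : ℝ) 0 ∧ nRoots q p.1 p.2 = 3} ≤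
          ENNReal.ofReal (q / (2 * (1 - q))) ∧
      volume {p : ℝ × ℝ | p.1 ∈ Ioo (1 : ℝ) 2 ∧ p.2 ∈ Ioo (-1 : ℝ) 0 ∧ nRoots q p.1 p.2 = 3} ≤
          ENNReal.ofReal (1 / 2)) ∧
    Filter.Tendsto
      (fun q : ℝ =>
        volume {p : ℝ × ℝ | p.1 ∈ Ioo (1 : ℝ) 2 ∧ p.2 ∈ Ioo (-1 : ℝ) 0 ∧ nRoots q p.1 p.2 = 3})
      (nhdsWithin 0 (Ioo (0 : ℝ) (1 / 2))) (nhds 0) := by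
  refine ⟨fun q hq0 hq2 => ?_, ?_⟩
  · have hbound := volume_three_equilibria_le hq0 (by linarith)
    refine ⟨hbound, hbound.trans (ENNReal.ofReal_le_ofReal ?_)⟩
    rw [div_le_div_iff₀ (by linarith) (by norm_num)]
    linarith
  · have hcont : ContinuousAt (fun q : ℝ => ENNReal.ofReal (q / (2 * (1 - q)))) 0 :=
      ENNReal.continuous_ofReal.continuousAt.comp (by fun_prop (disch := norm_num))
    have hupper := hcont.tendsto.mono_left (nhdsWithin_le_nhds (s := Ioo (0 : ℝ) (1 / 2)))
    simp only [sub_zero, mul_one, zero_div, ENNReal.ofReal_zero] at hupper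
    refine tendsto_of_tendsto_of_tendsto_of_le_of_le' tendsto_const_nhds hupper
      (Filter.Eventually.of_forall fun q => zero_le) ?_
    filter_upwards [self_mem_nhdsWithin] with q hq
    exact volume_three_equilibria_le hq.1 (by linarith [hq.2])
end

section
/- Let 0 < q < 1/2 and let L_q : ℝ² → ℝ² be the linear map L_q(t,s) = ((1−q)t + qs, qt + (1−q)s). Then the intersection of the image of the open rectangle (0,1) × (−1,0) under L_q with the open square (−1,0) × (−1,0) equals the interior of the triangle with vertices M = (−q,−(1−q)), N = (0,−(1−2q)/(1−q)), O = (0,0). -/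
/-!
Since `det L_q = 1 - 2q > 0`, `L_q` is invertible and every point is `L_q (t, s)` for a unique
`(t, s)`. In these coordinates the rectangle-and-square conditions collapse to the three
constraints `t > 0`, `s > -1`, `(1 - q) t + q s < 0`, i.e. to three open half-planes in the
original coordinates. The closed triangle `MNO` is the intersection of the corresponding closed
half-planes (its points have explicit nonnegative barycentric weights), and the interior of an
intersection of finitely many closed half-planes is the intersection of the open ones.
-/

open Set

def halfPlane (a b c : ℝ) : Set (ℝ × ℝ) := {p | a * p.1 + b * p.2 ≤ c}

def openHalfPlane (a b c : ℝ) : Set (ℝ × ℝ) := {p | a * p.1 + b * p.2 < c}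

theorem convex_halfPlane_s10 (a b c : ℝ) : Convex ℝ (halfPlane a b c) :=
  convex_halfSpace_le ⟨fun p r => by simp only [Prod.fst_add, Prod.snd_add]; ring,
    fun r p => by simp only [Prod.smul_fst, Prod.smul_snd, smul_eq_mul]; ring⟩ c

theorem interior_halfPlane_s10 {a b : ℝ} (hab : (a, b) ≠ 0) (c : ℝ) :
    interior (halfPlane a b c) = openHalfPlane a b c := by
  set f : StrongDual ℝ (ℝ × ℝ) :=
    a • ContinuousLinearMap.fst ℝ ℝ ℝ + b • ContinuousLinearMap.snd ℝ ℝ ℝ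
  have hf : f ≠ 0 := fun h => hab <| by
    have ha : a = 0 := by simpa [f] using congrArg (fun g : StrongDual ℝ (ℝ × ℝ) => g (1, 0)) h
    have hb : b = 0 := by simpa [f] using congrArg (fun g : StrongDual ℝ (ℝ × ℝ) => g (0, 1)) h
    simp [ha, hb]
  have := (f.isOpenMap_of_ne_zero hf).preimage_interior_eq_interior_preimage f.continuous (Iic c)
  rwa [interior_Iic, eq_comm] at this

theorem mem_convexHull_triple_s10 {𝕜 E : Type*} [Field 𝕜] [LinearOrder 𝕜] [IsStrictOrderedRing 𝕜]
    [AddCommGroup E] [Module 𝕜 E] {a b c : E} {α β γ : 𝕜} (hα : 0 ≤ α) (hβ : 0 ≤ β)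
    (hγ : 0 ≤ γ) (hsum : α + β + γ = 1) : α • a + β • b + γ • c ∈ convexHull 𝕜 {a, b, c} := by
  have := (convex_convexHull 𝕜 ({a, b, c} : Set E)).sum_mem (t := Finset.univ)
    (w := ![α, β, γ]) (z := ![a, b, c]) (fun i _ => by fin_cases i <;> assumption)
    (by simpa [Fin.sum_univ_three] using hsum)
    (fun i _ => subset_convexHull 𝕜 _ (by fin_cases i <;> simp))
  simpa [Fin.sum_univ_three, add_assoc] using this

/-- The map `L_q`; the paper applies it to `(T - 1, S)`. -/
def mix (q : ℝ) (p : ℝ × ℝ) : ℝ × ℝ := ((1 - q) * p.1 + q * p.2, q * p.1 + (1 - q) * p.2)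

noncomputable def unmix (q : ℝ) (p : ℝ × ℝ) : ℝ × ℝ :=
  (((1 - q) * p.1 - q * p.2) / (1 - 2 * q), ((1 - q) * p.2 - q * p.1) / (1 - 2 * q))

section

variable {q : ℝ}

theorem unmix_mix (hq : 1 - 2 * q ≠ 0) (p : ℝ × ℝ) : unmix q (mix q p) = p := by
  ext <;> simp only [unmix, mix] <;> rw [div_eq_iff hq] <;> ring

theorem mix_unmix (hq : 1 - 2 * q ≠ 0) (p : ℝ × ℝ) : mix q (unmix q p) = p := by
  ext <;> simp only [unmix, mix] <;>
    rw [mul_div_assoc', mul_div_assoc', ← add_div, div_eq_iff hq] <;> ring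

theorem image_mix_rectangle_inter_square_eq_inter_openHalfPlane (hq0 : 0 < q) (hq2 : q < 1 / 2) :
    mix q '' (Ioo 0 1 ×ˢ Ioo (-1) 0) ∩ Ioo (-1) 0 ×ˢ Ioo (-1) 0 =
      openHalfPlane 1 0 0 ∩ openHalfPlane (-(1 - q)) q 0 ∩
        openHalfPlane q (-(1 - q)) (1 - 2 * q) := by
  have hq : 0 < 1 - 2 * q := by linarith
  ext p
  obtain ⟨⟨t, s⟩, rfl⟩ : ∃ r, mix q r = p := ⟨unmix q p, mix_unmix hq.ne' p⟩
  rw [mem_inter_iff, (Function.LeftInverse.injective (unmix_mix hq.ne')).mem_set_image]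
  have htriangle : mix q (t, s) ∈ openHalfPlane 1 0 0 ∩ openHalfPlane (-(1 - q)) q 0 ∩
      openHalfPlane q (-(1 - q)) (1 - 2 * q) ↔ (1 - q) * t + q * s < 0 ∧ 0 < t ∧ -1 < s := by
    simp only [openHalfPlane, mix, mem_inter_iff, mem_ofPred_eq]
    constructor
    · rintro ⟨⟨hx, ht⟩, hs⟩
      exact ⟨by linarith, by nlinarith, by nlinarith⟩
    · rintro ⟨hx, ht, hs⟩
      exact ⟨⟨by linarith, by nlinarith⟩, by nlinarith⟩
  rw [htriangle]
  simp only [mix, mem_prod, mem_Ioo]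
  constructor
  · rintro ⟨⟨⟨ht, -⟩, hs, -⟩, ⟨-, hx⟩, -⟩
    exact ⟨hx, ht, hs⟩
  · rintro ⟨hx, ht, hs⟩
    have hs0 : s < 0 := by nlinarith
    exact ⟨⟨⟨ht, by nlinarith⟩, hs, hs0⟩, ⟨by nlinarith, hx⟩, by nlinarith, by nlinarith⟩

theorem convexHull_triangle_eq_inter_halfPlane (hq0 : 0 < q) (hq2 : q < 1 / 2) :
    convexHull ℝ {((-q : ℝ), -(1 - q)), ((0 : ℝ), -(1 - 2 * q) / (1 - q)), ((0 : ℝ), (0 : ℝ))} =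
      halfPlane 1 0 0 ∩ halfPlane (-(1 - q)) q 0 ∩ halfPlane q (-(1 - q)) (1 - 2 * q) := by
  have hq : 0 < 1 - 2 * q := by linarith
  have hq1 : 0 < 1 - q := by linarith
  apply Subset.antisymm
  · refine convexHull_min ?_ (((convex_halfPlane_s10 _ _ _).inter (convex_halfPlane_s10 _ _ _)).inter
      (convex_halfPlane_s10 _ _ _))
    have hNy : (1 - q) * (-(1 - 2 * q) / (1 - q)) = -(1 - 2 * q) := by field_simp
    have hNy_nonpos : -(1 - 2 * q) / (1 - q) ≤ 0 :=
      div_nonpos_of_nonpos_of_nonneg (by linarith) hq1.le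
    rintro p (rfl | rfl | rfl) <;> simp only [halfPlane, mem_inter_iff, mem_ofPred_eq]
    · exact ⟨⟨by linarith, by nlinarith⟩, by nlinarith⟩
    · exact ⟨⟨by linarith, by nlinarith⟩, by nlinarith⟩
    · exact ⟨⟨by linarith, by linarith⟩, by linarith⟩
  · rintro ⟨x, y⟩ ⟨⟨hx, hu⟩, hv⟩
    simp only [halfPlane, mem_ofPred_eq] at hx hu hv
    have hd : 1 - 2 * q ≠ 0 := hq.ne'
    set d := 1 - 2 * q with hd_def
    -- the barycentric coordinates of `(x, y)` with respect to `M`, `N`, `O`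
    convert mem_convexHull_triple_s10 (𝕜 := ℝ) (α := -x / q)
      (β := (1 - q) * ((1 - q) * x - q * y) / (q * d))
      (γ := (d + (1 - q) * y - q * x) / d)
      (div_nonneg (by linarith) hq0.le) (div_nonneg (by nlinarith) (by positivity))
      (div_nonneg (by linarith) hq.le) ?_ using 1
    · ext <;> simp only [Prod.smul_mk, Prod.mk_add_mk, smul_eq_mul] <;> field_simp
      · ring
      · rw [hd_def]; ring
    · field_simp; rw [hd_def]; ring

end

theorem image_rectangle_inter_square_eq_triangle (q : ℝ) (hq0 : 0 < q) (hq2 : q < 1 / 2) :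
    (fun p : ℝ × ℝ => ((1 - q) * p.1 + q * p.2, q * p.1 + (1 - q) * p.2)) ''
          (Ioo (0 : ℝ) 1 ×ˢ Ioo (-1 : ℝ) 0) ∩ (Ioo (-1 : ℝ) 0 ×ˢ Ioo (-1 : ℝ) 0) =
      interior (convexHull ℝ
        {((-q : ℝ), -(1 - q)), ((0 : ℝ), -(1 - 2 * q) / (1 - q)), ((0 : ℝ), (0 : ℝ))}) := by
  have hu : (-(1 - q), q) ≠ (0 : ℝ × ℝ) := by simp [hq0.ne']
  have hv : (q, -(1 - q)) ≠ (0 : ℝ × ℝ) := by simp [hq0.ne']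
  rw [convexHull_triangle_eq_inter_halfPlane hq0 hq2, interior_inter, interior_inter,
    interior_halfPlane_s10 (by simp), interior_halfPlane_s10 hu, interior_halfPlane_s10 hv]
  exact image_mix_rectangle_inter_square_eq_inter_openHalfPlane hq0 hq2
end

section
/- Let 0 < q < 1/2 and let T, S ∈ ℝ. Define a = T + S − 1, b = 1 − T − 2S + q(S − 1 − T), c = S + q(T − S), and h(x) = ax² + bx + c. Then h has exactly two distinct roots in the open interval (0,1) if and only if the following three conditions hold: (q + a − c)² + 4qc > 0, q + a − c < 0, and c < 0. -/
/-!
Under `t = x / (1 - x)`, the roots of `h` in `(0, 1)` correspond to the positive roots of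
`g(t) = h(1) t² + (b + 2c) t + c = (1 + t)² h(t / (1 + t))`, and here `h(1) = -q < 0`.
By Vieta, a real quadratic has two distinct positive roots exactly when its discriminant is
positive, the sum of its roots `-β/α` is positive and their product `γ/α` is positive.
-/

open Set

theorem quadratic_eq_zero_iff_of_div_one_add {a b c t : ℝ} (ht : 1 + t ≠ 0) :
    a * (t / (1 + t)) ^ 2 + b * (t / (1 + t)) + c = 0 ↔
      (a + b + c) * t ^ 2 + (b + 2 * c) * t + c = 0 := by
  have key : a * (t / (1 + t)) ^ 2 + b * (t / (1 + t)) + c =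
      ((a + b + c) * t ^ 2 + (b + 2 * c) * t + c) / (1 + t) ^ 2 := by
    field_simp
    ring
  rw [key, div_eq_zero_iff, or_iff_left (pow_ne_zero 2 ht)]

theorem ncard_roots_Ioo_eq_ncard_pos_roots (a b c : ℝ) :
    {x : ℝ | x ∈ Ioo (0 : ℝ) 1 ∧ a * x ^ 2 + b * x + c = 0}.ncard =
      {t : ℝ | 0 < t ∧ (a + b + c) * t ^ 2 + (b + 2 * c) * t + c = 0}.ncard := by
  symm
  refine BijOn.ncard_eq (f := fun t => t / (1 + t)) ⟨?_, ?_, ?_⟩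
  · rintro t ⟨ht, hg⟩
    refine ⟨⟨by positivity, (div_lt_one (by positivity)).2 (by linarith)⟩, ?_⟩
    exact (quadratic_eq_zero_iff_of_div_one_add (by positivity)).2 hg
  · rintro s ⟨hs, -⟩ t ⟨ht, -⟩ hst
    simp only [div_eq_div_iff (by positivity : 1 + s ≠ 0) (by positivity : 1 + t ≠ 0)] at hst
    linarith
  · rintro x ⟨⟨hx0, hx1⟩, hx⟩
    have h1x : 1 - x ≠ 0 := by linarith
    have ht : 0 < x / (1 - x) := div_pos hx0 (by linarith)
    have hinv : x / (1 - x) / (1 + x / (1 - x)) = x := by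
      field_simp
      ring
    refine ⟨x / (1 - x), ⟨ht, ?_⟩, hinv⟩
    rw [← quadratic_eq_zero_iff_of_div_one_add (by positivity), hinv]
    exact hx

theorem pos_of_quadratic_eq_zero {α β γ t : ℝ} (hβ : α * β < 0) (hγ : 0 < α * γ)
    (ht : α * t ^ 2 + β * t + γ = 0) : 0 < t := by
  by_contra! ht0
  have h_scaled : (α * t) ^ 2 + α * β * t + α * γ = 0 := by linear_combination α * ht
  have : 0 ≤ α * β * t := mul_nonneg_of_nonpos_of_nonpos hβ.le ht0
  linarith [sq_nonneg (α * t)]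

theorem vieta_of_ne {α β γ x y : ℝ} (hxy : x ≠ y) (hx : α * x ^ 2 + β * x + γ = 0)
    (hy : α * y ^ 2 + β * y + γ = 0) : α * (x + y) = -β ∧ α * (x * y) = γ := by
  have hsum : α * (x + y) + β = 0 := by
    have : (x - y) * (α * (x + y) + β) = 0 := by linear_combination hx - hy
    exact (mul_eq_zero.mp this).resolve_left (sub_ne_zero.mpr hxy)
  exact ⟨by linear_combination hsum, by linear_combination x * hsum - hx⟩

theorem ncard_pos_roots_eq_two_iff {α β γ : ℝ} (hα : α ≠ 0) :
    {t : ℝ | 0 < t ∧ α * t ^ 2 + β * t + γ = 0}.ncard = 2 ↔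
      0 < discrim α β γ ∧ α * β < 0 ∧ 0 < α * γ := by
  constructor
  · rw [ncard_eq_two]
    rintro ⟨x, y, hxy, hset⟩
    obtain ⟨hx0, hx⟩ : x ∈ {t : ℝ | 0 < t ∧ α * t ^ 2 + β * t + γ = 0} :=
      hset ▸ mem_insert x {y}
    obtain ⟨hy0, hy⟩ : y ∈ {t : ℝ | 0 < t ∧ α * t ^ 2 + β * t + γ = 0} :=
      hset ▸ mem_insert_of_mem x rfl
    obtain ⟨hsum, hprod⟩ := vieta_of_ne hxy hx hy
    have hα2 : 0 < α ^ 2 := by positivity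
    refine ⟨?_, ?_, ?_⟩
    · have : discrim α β γ = α ^ 2 * (x - y) ^ 2 := by
        rw [discrim, ← neg_neg β, ← hsum, ← hprod]; ring
      rw [this]
      exact mul_pos hα2 (sq_pos_iff.mpr (sub_ne_zero.mpr hxy))
    · rw [← neg_neg β, ← hsum]; nlinarith
    · rw [← hprod]; nlinarith [mul_pos hx0 hy0]
  · rintro ⟨hD, hβ, hγ⟩
    set s := √(discrim α β γ)
    have hs : discrim α β γ = s * s := (Real.mul_self_sqrt hD.le).symm
    have hroots : {t : ℝ | 0 < t ∧ α * t ^ 2 + β * t + γ = 0} =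
        {(-β + s) / (2 * α), (-β - s) / (2 * α)} := by
      ext t
      rw [mem_ofPred_eq, mem_insert_iff, mem_singleton_iff,
        and_iff_right_of_imp (pos_of_quadratic_eq_zero hβ hγ), sq, quadratic_eq_zero_iff hα hs]
    rw [hroots]
    refine ncard_pair ?_
    rw [Ne, div_left_inj' (mul_ne_zero two_ne_zero hα)]
    have : 0 < s := Real.sqrt_pos.mpr hD
    linarith

theorem quadratic_two_roots_iff_general (q T S : ℝ) (hq0 : 0 < q) :
    ({x : ℝ | x ∈ Ioo (0 : ℝ) 1 ∧
        (T + S - 1) * x ^ 2 + (1 - T - 2 * S + q * (S - 1 - T)) * x + (S + q * (T - S)) = 0}.ncard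
      = 2) ↔
      ((q + (T + S - 1) - (S + q * (T - S))) ^ 2 + 4 * q * (S + q * (T - S)) > 0 ∧
        q + (T + S - 1) - (S + q * (T - S)) < 0 ∧ S + q * (T - S) < 0) := by
  set a := T + S - 1
  set b := 1 - T - 2 * S + q * (S - 1 - T)
  set c := S + q * (T - S)
  have h_one : a + b + c = -q := by ring
  have h_mid : b + 2 * c = -(q + a - c) := by linear_combination h_one
  have h_neg (y : ℝ) : q * y < 0 ↔ y < 0 := smul_neg_iff_of_pos_left hq0
  have h_discrim : discrim (-q) (-(q + a - c)) c = (q + a - c) ^ 2 + 4 * q * c := by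
    rw [discrim]; ring
  rw [ncard_roots_Ioo_eq_ncard_pos_roots, ncard_pos_roots_eq_two_iff (by linarith), h_one, h_mid,
    h_discrim, neg_mul_neg, neg_mul, neg_pos, h_neg, h_neg, gt_iff_lt]

theorem quadratic_two_roots_iff (q T S : ℝ) (hq0 : 0 < q) (hq2 : q < 1 / 2) :
    ({x : ℝ | x ∈ Ioo (0 : ℝ) 1 ∧
        (T + S - 1) * x ^ 2 + (1 - T - 2 * S + q * (S - 1 - T)) * x + (S + q * (T - S)) = 0}.ncard
      = 2) ↔
      ((q + (T + S - 1) - (S + q * (T - S))) ^ 2 + 4 * q * (S + q * (T - S)) > 0 ∧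
        q + (T + S - 1) - (S + q * (T - S)) < 0 ∧ S + q * (T - S) < 0) :=
  quadratic_two_roots_iff_general q T S hq0
end

section
/- Let 0 < q < 1/2. Then the equation −x²/(4q) − q = (qx − (1−2q))/(1−q) has exactly two real solutions, x₁ = −2q²/(1−q) − 2√q(1−2q)/(1−q) and x₂ = −2q²/(1−q) + 2√q(1−2q)/(1−q) with x₁ < x₂; moreover, −1 < x₁ < −q for all q ∈ (0,1/2), and x₂ < −q if and only if q > 4/9. -/
/-!
Clearing denominators turns the intersection condition into the quadratic
`(1 - q) x² + 4 q² x + 4 q² (1 - q) - 4 q (1 - 2 q) = 0`, whose discriminant is the perfect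
square `16 q (1 - 2 q)²`. Writing the roots with a signed square root `s` of `q` (`s = ±√q`),
the distances of a root to `-1` and to `-q` factor as
`(1 + s) (1 - 2 q) / (1 - s)` and `s (1 + s) (2 - 3 s) / (1 - s)`,
so all sign questions reduce to the signs of `1 ± s`, `1 - 2 q` and `2 ∓ 3 √q`.
-/

open Set

noncomputable def parabolaLineRoot (q s : ℝ) : ℝ :=
  -2 * q ^ 2 / (1 - q) + 2 * s * (1 - 2 * q) / (1 - q)

section

variable {q s : ℝ}

lemma parabola_eq_line_iff_quadratic (hq0 : q ≠ 0) (hq1 : 1 - q ≠ 0) (x : ℝ) :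
    -x ^ 2 / (4 * q) - q = (q * x - (1 - 2 * q)) / (1 - q) ↔
      (1 - q) * (x * x) + 4 * q ^ 2 * x + (4 * q ^ 2 * (1 - q) - 4 * q * (1 - 2 * q)) = 0 := by
  rw [div_sub' (by positivity), div_eq_div_iff (by positivity) hq1]
  constructor <;> intro h <;> linear_combination -h

lemma discrim_parabola_line (hs : s ^ 2 = q) :
    discrim (1 - q) (4 * q ^ 2) (4 * q ^ 2 * (1 - q) - 4 * q * (1 - 2 * q)) =
      (4 * s * (1 - 2 * q)) * (4 * s * (1 - 2 * q)) := by
  rw [discrim, ← hs]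
  ring

lemma setOf_parabola_eq_line (hq0 : q ≠ 0) (hq1 : 1 - q ≠ 0) (hs : s ^ 2 = q) :
    {x : ℝ | -x ^ 2 / (4 * q) - q = (q * x - (1 - 2 * q)) / (1 - q)} =
      {parabolaLineRoot q (-s), parabolaLineRoot q s} := by
  ext x
  rw [mem_ofPred_eq, parabola_eq_line_iff_quadratic hq0 hq1,
    quadratic_eq_zero_iff hq1 (discrim_parabola_line hs), mem_insert_iff, mem_singleton_iff,
    or_comm, parabolaLineRoot, parabolaLineRoot]
  congr! 2 <;> field_simp <;> ring

lemma parabolaLineRoot_sub_neg (q s : ℝ) :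
    parabolaLineRoot q s - parabolaLineRoot q (-s) = 4 * s * (1 - 2 * q) / (1 - q) := by
  rw [parabolaLineRoot, parabolaLineRoot]
  ring

lemma parabolaLineRoot_add_one (hs : s ^ 2 = q) (hs1 : 1 - s ≠ 0) (hs1' : 1 + s ≠ 0) :
    parabolaLineRoot q s + 1 = (1 + s) / (1 - s) * (1 - 2 * q) := by
  have hq1 : 1 - q = (1 - s) * (1 + s) := by rw [← hs]; ring
  rw [parabolaLineRoot, hq1]
  field_simp
  rw [← hs]
  ring

lemma parabolaLineRoot_add_q (hs : s ^ 2 = q) (hs1 : 1 - s ≠ 0) (hs1' : 1 + s ≠ 0) :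
    parabolaLineRoot q s + q = s * (1 + s) / (1 - s) * (2 - 3 * s) := by
  have hq1 : 1 - q = (1 - s) * (1 + s) := by rw [← hs]; ring
  rw [parabolaLineRoot, hq1]
  field_simp
  rw [← hs]
  ring

end

theorem parabola_line_intersection_G (q : ℝ) (hq0 : 0 < q) (hq2 : q < 1 / 2) :
    {x : ℝ | -x ^ 2 / (4 * q) - q = (q * x - (1 - 2 * q)) / (1 - q)} =
        {-2 * q ^ 2 / (1 - q) - 2 * Real.sqrt q * (1 - 2 * q) / (1 - q),
          -2 * q ^ 2 / (1 - q) + 2 * Real.sqrt q * (1 - 2 * q) / (1 - q)} ∧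
      -2 * q ^ 2 / (1 - q) - 2 * Real.sqrt q * (1 - 2 * q) / (1 - q) <
        -2 * q ^ 2 / (1 - q) + 2 * Real.sqrt q * (1 - 2 * q) / (1 - q) ∧
      (-1 < -2 * q ^ 2 / (1 - q) - 2 * Real.sqrt q * (1 - 2 * q) / (1 - q) ∧
        -2 * q ^ 2 / (1 - q) - 2 * Real.sqrt q * (1 - 2 * q) / (1 - q) < -q) ∧
      (-2 * q ^ 2 / (1 - q) + 2 * Real.sqrt q * (1 - 2 * q) / (1 - q) < -q ↔ 4 / 9 < q) := by
  set s := Real.sqrt q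
  have hs : s ^ 2 = q := Real.sq_sqrt hq0.le
  have hs' : (-s) ^ 2 = q := by rw [neg_sq, hs]
  have hs0 : 0 < s := Real.sqrt_pos.2 hq0
  have hs1 : s < 1 := by nlinarith
  have hx₁ : -2 * q ^ 2 / (1 - q) - 2 * s * (1 - 2 * q) / (1 - q) = parabolaLineRoot q (-s) := by
    rw [parabolaLineRoot]; ring
  have hx₂ : -2 * q ^ 2 / (1 - q) + 2 * s * (1 - 2 * q) / (1 - q) = parabolaLineRoot q s := rfl
  rw [hx₁, hx₂, lt_neg_iff_add_neg, lt_neg_iff_add_neg, ← sub_pos, neg_lt_iff_pos_add]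
  refine ⟨setOf_parabola_eq_line hq0.ne' (by linarith) hs, ?_, ⟨?_, ?_⟩, ?_⟩
  · rw [parabolaLineRoot_sub_neg]
    exact div_pos (by nlinarith) (by linarith)
  · rw [parabolaLineRoot_add_one hs' (by linarith) (by linarith)]
    exact mul_pos (div_pos (by linarith) (by linarith)) (by linarith)
  · rw [parabolaLineRoot_add_q hs' (by linarith) (by linarith)]
    exact mul_neg_of_neg_of_pos (div_neg_of_neg_of_pos (by nlinarith) (by linarith)) (by linarith)
  · have hc : 0 < s * (1 + s) / (1 - s) := div_pos (by positivity) (by linarith)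
    rw [parabolaLineRoot_add_q hs (by linarith) (by linarith)]
    refine (smul_neg_iff_of_pos_left hc).trans ?_
    rw [sub_neg, show (4 / 9 : ℝ) = (2 / 3) ^ 2 by norm_num, ← Real.lt_sqrt (by norm_num),
      div_lt_iff₀' (by norm_num)]
end

section
/- Let 0 < q < 1/2. Then the two-dimensional Lebesgue measure of the set {(x,y) ∈ ℝ² : (qx − (1−2q))/(1−q) < y < −x²/(4q) − q} equals 8√q(1−2q)³/(3(1−q)³). -/
/-!
The vertical gap between the parabola and the line is the quadratic
`(b - x) (x - a) / (4q)`, whose roots `a < b` are the abscissae of the intersection points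
`G₁, G₂`, with `b - a = 4√q (1 - 2q) / (1 - q)`. By Fubini the area of the lens is the integral
of the gap over `(a, b)`, and Archimedes' quadrature `∫ₐᵇ (b - x)(x - a) dx = (b - a)³ / 6`
gives `8√q (1 - 2q)³ / (3 (1 - q)³)`.
-/

open MeasureTheory Set

theorem integral_sub_mul_sub (a b : ℝ) :
    ∫ x in a..b, (b - x) * (x - a) = (b - a) ^ 3 / 6 := by
  have h : ∀ x : ℝ, (b - x) * (x - a) = -x ^ 2 + (a + b) * x - a * b := fun x => by ring
  simp only [h]
  rw [intervalIntegral.integral_sub, intervalIntegral.integral_add, intervalIntegral.integral_neg,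
    intervalIntegral.integral_const_mul, integral_pow, integral_id, intervalIntegral.integral_const]
  · simp only [smul_eq_mul]; ring
  all_goals exact Continuous.intervalIntegrable (by fun_prop) a b

theorem setOf_lt_and_lt_eq_regionBetween (f g : ℝ → ℝ) :
    {p : ℝ × ℝ | f p.1 < p.2 ∧ p.2 < g p.1} = regionBetween f g {x | f x < g x} := by
  ext p
  exact ⟨fun h => ⟨h.1.trans h.2, h⟩, And.right⟩

theorem setOf_lt_eq_Ioo_of_sub_eq {f g : ℝ → ℝ} {a b c : ℝ} (hab : a ≤ b) (hc : 0 < c)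
    (hgf : ∀ x, g x - f x = c * ((b - x) * (x - a))) : {x | f x < g x} = Ioo a b := by
  ext x
  rw [mem_Ioo, mem_ofPred_eq, ← sub_pos, hgf, mul_pos_iff_of_pos_left hc]
  constructor
  · intro h
    rcases mul_pos_iff.mp h with ⟨h1, h2⟩ | ⟨h1, h2⟩
    · constructor <;> linarith
    · linarith
  · rintro ⟨h1, h2⟩
    exact mul_pos (by linarith) (by linarith)

theorem volume_setOf_lt_and_lt_of_sub_eq {f g : ℝ → ℝ} {a b c : ℝ} (hf : Measurable f)
    (hg : Measurable g) (hab : a ≤ b) (hc : 0 < c)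
    (hgf : ∀ x, g x - f x = c * ((b - x) * (x - a))) :
    volume {p : ℝ × ℝ | f p.1 < p.2 ∧ p.2 < g p.1} = ENNReal.ofReal (c * (b - a) ^ 3 / 6) := by
  rw [setOf_lt_and_lt_eq_regionBetween, setOf_lt_eq_Ioo_of_sub_eq hab hc hgf,
    Measure.volume_eq_prod, volume_regionBetween_eq_lintegral' hf hg measurableSet_Ioo]
  simp only [Pi.sub_apply, hgf]
  rw [← ofReal_integral_eq_lintegral_ofReal, ← integral_Ioc_eq_integral_Ioo,
    ← intervalIntegral.integral_of_le hab, intervalIntegral.integral_const_mul,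
    integral_sub_mul_sub, mul_div_assoc]
  · exact (Continuous.integrableOn_Icc (by fun_prop)).mono_set Ioo_subset_Icc_self
  · exact (ae_restrict_iff' measurableSet_Ioo).mpr (.of_forall fun x hx =>
      mul_nonneg hc.le (mul_nonneg (by linarith [hx.2]) (by linarith [hx.1])))

theorem parabola_sub_line_eq (q x : ℝ) (hq : 0 < q) (hq1 : q ≠ 1) :
    (-x ^ 2 / (4 * q) - q) - (q * x - (1 - 2 * q)) / (1 - q) =
      1 / (4 * q) * (((-2 * q ^ 2 + 2 * √q * (1 - 2 * q)) / (1 - q) - x) *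
        (x - (-2 * q ^ 2 - 2 * √q * (1 - 2 * q)) / (1 - q))) := by
  have hsq : √q ^ 2 = q := Real.sq_sqrt hq.le
  have h1q : 1 - q ≠ 0 := sub_ne_zero.mpr hq1.symm
  field_simp
  linear_combination -4 * (1 - 2 * q) ^ 2 * hsq

theorem volume_lens (q : ℝ) (hq0 : 0 < q) (hq2 : q < 1 / 2) :
    volume {p : ℝ × ℝ | (q * p.1 - (1 - 2 * q)) / (1 - q) < p.2 ∧ p.2 < -p.1 ^ 2 / (4 * q) - q} =
      ENNReal.ofReal (8 * Real.sqrt q * (1 - 2 * q) ^ 3 / (3 * (1 - q) ^ 3)) := by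
  have h1q : 0 < 1 - q := by linarith
  have hroots : (-2 * q ^ 2 - 2 * √q * (1 - 2 * q)) / (1 - q) ≤
      (-2 * q ^ 2 + 2 * √q * (1 - 2 * q)) / (1 - q) := by
    gcongr
    nlinarith [Real.sqrt_nonneg q]
  rw [volume_setOf_lt_and_lt_of_sub_eq (by fun_prop) (by fun_prop) hroots (by positivity)
    fun x => parabola_sub_line_eq q x hq0 (by linarith)]
  congr 1
  have hsq : √q ^ 2 = q := Real.sq_sqrt hq0.le
  field_simp
  linear_combination 192 * (1 - 2 * q) ^ 3 * √q * hsq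
end

section
/- Let q = 1/2 and let T, S be real numbers with 0 < T < 1 and −1 < S < 0 (a Stag Hunt game). Then the number of distinct roots in [0,1] of the polynomial P_{q,T,S}(x) = (T+S−1)x³ + (1−T−2S+q(S−1−T))x² + (S+q(T−S))x equals 3 if T + S < 0, and equals 2 if T + S ≥ 0; in the first case the roots are 0, 1/2, and (T+S)/(T+S−1) ∈ (0,1). -/
open MeasureTheory Set

/- For `q = 1/2` the cubic depends on `T` and `S` only through `T + S`, and it factors as
`(T + S - 1) x (x - 1/2) (x - r)` with `r = (T + S)/(T + S - 1)`. In a Stag Hunt game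
`-1 < T + S < 1`, so `r ≠ 1/2`, and `r` lies in `(0,1)` exactly when `T + S < 0`;
otherwise `r ≤ 0` and only the roots `0` and `1/2` remain in `[0,1]`. -/

lemma P_half_eq_mul {T S : ℝ} (h : T + S ≠ 1) (x : ℝ) :
    P (1 / 2) T S x = (T + S - 1) * x * (x - 1 / 2) * (x - (T + S) / (T + S - 1)) := by
  have : T + S - 1 ≠ 0 := sub_ne_zero.2 h
  unfold P
  field_simp
  ring

lemma P_half_eq_zero_iff {T S : ℝ} (h : T + S ≠ 1) {x : ℝ} :
    P (1 / 2) T S x = 0 ↔ x = 0 ∨ x = 1 / 2 ∨ x = (T + S) / (T + S - 1) := by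
  simp only [P_half_eq_mul h, mul_eq_zero, sub_eq_zero, h, false_or, or_assoc]

lemma rootSet_P_half {T S : ℝ} (h : T + S ≠ 1) :
    {x : ℝ | x ∈ Icc (0 : ℝ) 1 ∧ P (1 / 2) T S x = 0} =
      Icc 0 1 ∩ {0, 1 / 2, (T + S) / (T + S - 1)} :=
  Set.ext fun _ => and_congr_right' (P_half_eq_zero_iff h)

lemma div_sub_one_mem_Ioo {s : ℝ} (hs : s < 0) : s / (s - 1) ∈ Ioo (0 : ℝ) 1 :=
  ⟨div_pos_of_neg_of_neg hs (by linarith), (div_lt_one_of_neg (by linarith)).2 (by linarith)⟩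

lemma div_sub_one_nonpos {s : ℝ} (hs0 : 0 ≤ s) (hs1 : s < 1) : s / (s - 1) ≤ 0 :=
  div_nonpos_of_nonneg_of_nonpos hs0 (by linarith)

lemma div_sub_one_ne_half {s : ℝ} (hs : s ≠ -1) (hs1 : s ≠ 1) : s / (s - 1) ≠ 1 / 2 := by
  rw [Ne, div_eq_iff (sub_ne_zero.2 hs1)]
  contrapose! hs
  linarith

lemma rootSet_P_half_of_neg {T S : ℝ} (hTS : T + S < 0) :
    {x : ℝ | x ∈ Icc (0 : ℝ) 1 ∧ P (1 / 2) T S x = 0} = {0, 1 / 2, (T + S) / (T + S - 1)} := by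
  obtain ⟨hr0, hr1⟩ := div_sub_one_mem_Ioo hTS
  rw [rootSet_P_half (by linarith), inter_eq_right, insert_subset_iff, insert_subset_iff,
    singleton_subset_iff]
  exact ⟨⟨le_rfl, zero_le_one⟩, ⟨by norm_num, by norm_num⟩, hr0.le, hr1.le⟩

lemma rootSet_P_half_of_nonneg {T S : ℝ} (h0 : 0 ≤ T + S) (h1 : T + S < 1) :
    {x : ℝ | x ∈ Icc (0 : ℝ) 1 ∧ P (1 / 2) T S x = 0} = {0, 1 / 2} := by
  have hr := div_sub_one_nonpos h0 h1
  rw [rootSet_P_half h1.ne]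
  ext x
  simp only [mem_inter_iff, mem_Icc, mem_insert_iff, mem_singleton_iff]
  constructor
  · rintro ⟨⟨hx0, -⟩, rfl | rfl | rfl⟩
    exacts [Or.inl rfl, Or.inr rfl, Or.inl (le_antisymm hr hx0)]
  · rintro (rfl | rfl)
    exacts [⟨⟨le_rfl, zero_le_one⟩, Or.inl rfl⟩, ⟨⟨by norm_num, by norm_num⟩, Or.inr (Or.inl rfl)⟩]

theorem SH_q_half (T S : ℝ) (hT0 : 0 < T) (hT1 : T < 1) (hS0 : -1 < S) (hS1 : S < 0) :
    (T + S < 0 →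
      nRoots (1 / 2) T S = 3 ∧
        {x : ℝ | x ∈ Set.Icc (0 : ℝ) 1 ∧ P (1 / 2) T S x = 0} =
          {0, 1 / 2, (T + S) / (T + S - 1)} ∧
        (T + S) / (T + S - 1) ∈ Ioo (0 : ℝ) 1) ∧
    (T + S ≥ 0 → nRoots (1 / 2) T S = 2) := by
  refine ⟨fun hneg => ?_, fun hnn => ?_⟩
  · obtain ⟨hr0, hr1⟩ := div_sub_one_mem_Ioo hneg
    have hr_ne : (T + S) / (T + S - 1) ≠ 1 / 2 :=
      div_sub_one_ne_half (by linarith) (by linarith)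
    refine ⟨?_, rootSet_P_half_of_neg hneg, hr0, hr1⟩
    rw [nRoots, rootSet_P_half_of_neg hneg, ncard_eq_three]
    exact ⟨0, 1 / 2, _, by norm_num, hr0.ne, hr_ne.symm, rfl⟩
  · rw [nRoots, rootSet_P_half_of_nonneg hnn (by linarith), ncard_pair (by norm_num)]
end
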